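/- arXiv:2303.11609 — 2 statements merged into one kernel-verified Lean document; each statement's English description precedes it below -/
import Mathlib

section
/- Let gamma>0, s>0 and let phi^n be a cell-centered grid function on Omega=(0,L)^3. For l=1,2, let mu_l be a zero-mean cell-centered grid function (with Neumann ghost values), and suppose (u_l, p_l) solves the discrete Stokes system: u_l is a MAC vector field with the no-penetration and free-slip boundary conditions, p_l is cell-centered, -Delta_h u_l + u_l + grad_h p_l = -gamma*(A_h phi^n . grad_h mu_l) componentwise at every interior face, and div_h u_l = 0 at every cell. Define L_h mu_l := s*div_h(A_h phi^n . u_l) - s*Delta_h mu_l. Then (mu_1, L_h mu_2) = s*(grad_h mu_1, grad_h mu_2) + (s/gamma)*[ (u_1,u_2) + (-Delta_h u_1, u_2) ]; in particular (mu_1, L_h mu_2) = (L_h mu_1, mu_2), and taking mu_1=mu_2=mu gives (mu, L_h mu) >= s*||grad_h mu||_2^2. -/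
open Finset

noncomputable section

/-! Finite–difference / MAC-grid framework on Ω = (0,L)³ with N cells per
direction and mesh size h = L/N.  A cell-centered grid function is a map
`ℤ → ℤ → ℤ → ℝ` whose meaningful values are at indices in {1,…,N}³; ghost
values are given by the discrete homogeneous Neumann (reflection) condition,
implemented by clamping indices to {1,…,N}.  The x-component of a MAC vector
field is recorded so that `ux i j k` is the value at the x-face (i+1/2,j,k),
0 ≤ i ≤ N, 1 ≤ j,k ≤ N (analogously for the y,z components), and the
free-slip condition prescribes the tangential ghost values by reflection,
again implemented by clamping the tangential indices. -/

/-- Index clamped into `{1,…,N}`: implements the reflection ghost values. -/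
def clampIdx (N : ℕ) (i : ℤ) : ℤ := max 1 (min i (N : ℤ))

/-- Extension of a cell-centered grid function by the discrete homogeneous
Neumann (reflection) ghost values. -/
def nExt (N : ℕ) (φ : ℤ → ℤ → ℤ → ℝ) (i j k : ℤ) : ℝ :=
  φ (clampIdx N i) (clampIdx N j) (clampIdx N k)

/-- The cell indices `{1,…,N}`. -/
def cellIdx (N : ℕ) : Finset ℤ := Finset.Icc 1 (N : ℤ)

/-- The interior-face indices `{1,…,N-1}`. -/
def faceIdx (N : ℕ) : Finset ℤ := Finset.Icc 1 ((N : ℤ) - 1)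

/-- Cell-centered discrete inner product `(φ,ψ) = h³ Σ φψ`. -/
def cip (N : ℕ) (h : ℝ) (φ ψ : ℤ → ℤ → ℤ → ℝ) : ℝ :=
  h ^ 3 * ∑ i ∈ cellIdx N, ∑ j ∈ cellIdx N, ∑ k ∈ cellIdx N, φ i j k * ψ i j k

/-- Zero discrete mean: `Σ_{i,j,k=1}^N φ_{ijk} = 0`. -/
def zeroMean (N : ℕ) (φ : ℤ → ℤ → ℤ → ℝ) : Prop :=
  ∑ i ∈ cellIdx N, ∑ j ∈ cellIdx N, ∑ k ∈ cellIdx N, φ i j k = 0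

/-- Two cell-centered functions agree on all cells. -/
def CellEqOn (N : ℕ) (φ ψ : ℤ → ℤ → ℤ → ℝ) : Prop :=
  ∀ i ∈ cellIdx N, ∀ j ∈ cellIdx N, ∀ k ∈ cellIdx N, φ i j k = ψ i j k

/-- Discrete maximum norm over the cells. -/
def cInf (N : ℕ) (φ : ℤ → ℤ → ℤ → ℝ) : ℝ :=
  sSup {r : ℝ | ∃ i ∈ cellIdx N, ∃ j ∈ cellIdx N, ∃ k ∈ cellIdx N, r = |φ i j k|}

/-- `D_x φ` at the x-face `(i+1/2,j,k)` (recorded at index `(i,j,k)`);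
it vanishes at the boundary faces `i = 0, N` by the Neumann ghost values. -/
def Dx (N : ℕ) (h : ℝ) (φ : ℤ → ℤ → ℤ → ℝ) (i j k : ℤ) : ℝ :=
  (nExt N φ (i + 1) j k - nExt N φ i j k) / h

/-- `D_y φ` at the y-face `(i,j+1/2,k)`. -/
def Dy (N : ℕ) (h : ℝ) (φ : ℤ → ℤ → ℤ → ℝ) (i j k : ℤ) : ℝ :=
  (nExt N φ i (j + 1) k - nExt N φ i j k) / h

/-- `D_z φ` at the z-face `(i,j,k+1/2)`. -/
def Dz (N : ℕ) (h : ℝ) (φ : ℤ → ℤ → ℤ → ℝ) (i j k : ℤ) : ℝ :=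
  (nExt N φ i j (k + 1) - nExt N φ i j k) / h

/-- Cell-centered discrete Laplacian, using the Neumann ghost values. -/
def lapC (N : ℕ) (h : ℝ) (φ : ℤ → ℤ → ℤ → ℝ) (i j k : ℤ) : ℝ :=
  (nExt N φ (i + 1) j k + nExt N φ (i - 1) j k + nExt N φ i (j + 1) k +
      nExt N φ i (j - 1) k + nExt N φ i j (k + 1) + nExt N φ i j (k - 1) -
      6 * nExt N φ i j k) / h ^ 2

/-- `‖∇_h φ‖₂²`: sum of squared differences over all interior faces. -/
def gradSq (N : ℕ) (h : ℝ) (φ : ℤ → ℤ → ℤ → ℝ) : ℝ :=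
  h ^ 3 *
    ((∑ i ∈ faceIdx N, ∑ j ∈ cellIdx N, ∑ k ∈ cellIdx N, Dx N h φ i j k ^ 2) +
      (∑ i ∈ cellIdx N, ∑ j ∈ faceIdx N, ∑ k ∈ cellIdx N, Dy N h φ i j k ^ 2) +
      (∑ i ∈ cellIdx N, ∑ j ∈ cellIdx N, ∑ k ∈ faceIdx N, Dz N h φ i j k ^ 2))

/-- Face inner product `[f,g]_x`. -/
def ipFX (N : ℕ) (h : ℝ) (f g : ℤ → ℤ → ℤ → ℝ) : ℝ :=
  h ^ 3 / 2 * ∑ i ∈ cellIdx N, ∑ j ∈ cellIdx N, ∑ k ∈ cellIdx N,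
    (f i j k * g i j k + f (i - 1) j k * g (i - 1) j k)

/-- Face inner product `[f,g]_y`. -/
def ipFY (N : ℕ) (h : ℝ) (f g : ℤ → ℤ → ℤ → ℝ) : ℝ :=
  h ^ 3 / 2 * ∑ i ∈ cellIdx N, ∑ j ∈ cellIdx N, ∑ k ∈ cellIdx N,
    (f i j k * g i j k + f i (j - 1) k * g i (j - 1) k)

/-- Face inner product `[f,g]_z`. -/
def ipFZ (N : ℕ) (h : ℝ) (f g : ℤ → ℤ → ℤ → ℝ) : ℝ :=
  h ^ 3 / 2 * ∑ i ∈ cellIdx N, ∑ j ∈ cellIdx N, ∑ k ∈ cellIdx N,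
    (f i j k * g i j k + f i j (k - 1) * g i j (k - 1))

/-- MAC inner product of two vector fields. -/
def macIP (N : ℕ) (h : ℝ) (ux uy uz vx vy vz : ℤ → ℤ → ℤ → ℝ) : ℝ :=
  ipFX N h ux vx + ipFY N h uy vy + ipFZ N h uz vz

/-- Discrete divergence at the cell `(i,j,k)`. -/
def divH (h : ℝ) (ux uy uz : ℤ → ℤ → ℤ → ℝ) (i j k : ℤ) : ℝ :=
  (ux i j k - ux (i - 1) j k + uy i j k - uy i (j - 1) k +
    uz i j k - uz i j (k - 1)) / h

/-- No-penetration boundary condition: the normal boundary face values vanish. -/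
def NoPen (N : ℕ) (ux uy uz : ℤ → ℤ → ℤ → ℝ) : Prop :=
  (∀ j ∈ cellIdx N, ∀ k ∈ cellIdx N, ux 0 j k = 0 ∧ ux (N : ℤ) j k = 0) ∧
  (∀ i ∈ cellIdx N, ∀ k ∈ cellIdx N, uy i 0 k = 0 ∧ uy i (N : ℤ) k = 0) ∧
  (∀ i ∈ cellIdx N, ∀ j ∈ cellIdx N, uz i j 0 = 0 ∧ uz i j (N : ℤ) = 0)

/-- Free-slip (reflection) extension of the x-face component in the
tangential directions. -/
def fExtX (N : ℕ) (f : ℤ → ℤ → ℤ → ℝ) (i j k : ℤ) : ℝ :=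
  f i (clampIdx N j) (clampIdx N k)

/-- Free-slip extension of the y-face component. -/
def fExtY (N : ℕ) (f : ℤ → ℤ → ℤ → ℝ) (i j k : ℤ) : ℝ :=
  f (clampIdx N i) j (clampIdx N k)

/-- Free-slip extension of the z-face component. -/
def fExtZ (N : ℕ) (f : ℤ → ℤ → ℤ → ℝ) (i j k : ℤ) : ℝ :=
  f (clampIdx N i) (clampIdx N j) k

/-- Face-centered discrete Laplacian of the x-component (seven-point stencil,
free-slip ghost values in the tangential directions). -/
def lapFX (N : ℕ) (h : ℝ) (f : ℤ → ℤ → ℤ → ℝ) (i j k : ℤ) : ℝ :=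
  (fExtX N f (i + 1) j k + fExtX N f (i - 1) j k + fExtX N f i (j + 1) k +
      fExtX N f i (j - 1) k + fExtX N f i j (k + 1) + fExtX N f i j (k - 1) -
      6 * fExtX N f i j k) / h ^ 2

/-- Face-centered discrete Laplacian of the y-component. -/
def lapFY (N : ℕ) (h : ℝ) (f : ℤ → ℤ → ℤ → ℝ) (i j k : ℤ) : ℝ :=
  (fExtY N f (i + 1) j k + fExtY N f (i - 1) j k + fExtY N f i (j + 1) k +
      fExtY N f i (j - 1) k + fExtY N f i j (k + 1) + fExtY N f i j (k - 1) -
      6 * fExtY N f i j k) / h ^ 2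

/-- Face-centered discrete Laplacian of the z-component. -/
def lapFZ (N : ℕ) (h : ℝ) (f : ℤ → ℤ → ℤ → ℝ) (i j k : ℤ) : ℝ :=
  (fExtZ N f (i + 1) j k + fExtZ N f (i - 1) j k + fExtZ N f i (j + 1) k +
      fExtZ N f i (j - 1) k + fExtZ N f i j (k + 1) + fExtZ N f i j (k - 1) -
      6 * fExtZ N f i j k) / h ^ 2

/-- Face average `A_x φ` at the x-face `(i+1/2,j,k)`. -/
def AxF (N : ℕ) (φ : ℤ → ℤ → ℤ → ℝ) (i j k : ℤ) : ℝ :=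
  (nExt N φ (i + 1) j k + nExt N φ i j k) / 2

/-- Face average `A_y φ`. -/
def AyF (N : ℕ) (φ : ℤ → ℤ → ℤ → ℝ) (i j k : ℤ) : ℝ :=
  (nExt N φ i (j + 1) k + nExt N φ i j k) / 2

/-- Face average `A_z φ`. -/
def AzF (N : ℕ) (φ : ℤ → ℤ → ℤ → ℝ) (i j k : ℤ) : ℝ :=
  (nExt N φ i j (k + 1) + nExt N φ i j k) / 2

/-- The discrete Stokes system driven by the chemical potential `μ`:
`u` satisfies no-penetration (free-slip ghosts built into the face
Laplacians), the momentum equations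
`-Δ_h u + u + ∇_h p + γ A_hφⁿ ∇_h μ = 0` hold at every interior face, and
`∇_h · u = 0` at every cell. -/
def StokesForMu (N : ℕ) (h γ : ℝ) (φn μ p ux uy uz : ℤ → ℤ → ℤ → ℝ) : Prop :=
  NoPen N ux uy uz ∧
  (∀ i ∈ faceIdx N, ∀ j ∈ cellIdx N, ∀ k ∈ cellIdx N,
    -lapFX N h ux i j k + ux i j k + Dx N h p i j k +
      γ * (AxF N φn i j k * Dx N h μ i j k) = 0) ∧
  (∀ i ∈ cellIdx N, ∀ j ∈ faceIdx N, ∀ k ∈ cellIdx N,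
    -lapFY N h uy i j k + uy i j k + Dy N h p i j k +
      γ * (AyF N φn i j k * Dy N h μ i j k) = 0) ∧
  (∀ i ∈ cellIdx N, ∀ j ∈ cellIdx N, ∀ k ∈ faceIdx N,
    -lapFZ N h uz i j k + uz i j k + Dz N h p i j k +
      γ * (AzF N φn i j k * Dz N h μ i j k) = 0) ∧
  (∀ i ∈ cellIdx N, ∀ j ∈ cellIdx N, ∀ k ∈ cellIdx N, divH h ux uy uz i j k = 0)

/-- The operator `L_h μ = s ∇_h·(A_hφⁿ u_μ) − s Δ_h μ`, where `u_μ` is the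
Stokes velocity associated with `μ`. -/
def Lh (N : ℕ) (h s : ℝ) (φn μ ux uy uz : ℤ → ℤ → ℤ → ℝ) (i j k : ℤ) : ℝ :=
  s * divH h (fun a b c => AxF N φn a b c * ux a b c)
      (fun a b c => AyF N φn a b c * uy a b c)
      (fun a b c => AzF N φn a b c * uz a b c) i j k -
    s * lapC N h μ i j k


/-! ### Auxiliary summation lemmas -/

lemma sum_shift (a b : ℤ) (F : ℤ → ℝ) :
    (∑ i ∈ Finset.Icc a b, F (i - 1)) = ∑ i ∈ Finset.Icc (a-1) (b-1), F i := by
  have : Finset.Icc a b = Finset.Icc ((a-1)+1) ((b-1)+1) := by ring_nf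
  rw [this, ← Finset.map_add_right_Icc _ _ (1:ℤ), Finset.sum_map]
  simp

lemma abel1 (N : ℕ) (f g : ℤ → ℝ) (h0 : g 0 = 0) (hn : g (N:ℤ) = 0) :
    ∑ i ∈ Finset.Icc (1:ℤ) (N:ℤ), f i * (g i - g (i-1))
      = -∑ i ∈ Finset.Icc (1:ℤ) ((N:ℤ)-1), (f (i+1) - f i) * g i := by
  rcases Nat.eq_zero_or_pos N with h|h
  · subst h; simp
  have key : ∑ i ∈ Finset.Icc (1:ℤ) (N:ℤ), f i * g (i-1)
      = ∑ i ∈ Finset.Icc (0:ℤ) ((N:ℤ)-1), f (i+1) * g i := by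
    have := sum_shift 1 (N:ℤ) (fun i => f (i+1) * g i)
    simpa using this.symm ▸ (by
      apply Finset.sum_congr rfl
      intro i _
      simp : ∑ i ∈ Finset.Icc (1:ℤ) (N:ℤ), f i * g (i-1)
        = ∑ i ∈ Finset.Icc (1:ℤ) (N:ℤ), (fun i => f (i+1) * g i) (i - 1))
  have e1 : Finset.Icc (1:ℤ) (N:ℤ) = insert (N:ℤ) (Finset.Icc 1 ((N:ℤ)-1)) := by
    ext x; simp only [Finset.mem_Icc, Finset.mem_insert]; omega
  have e2 : Finset.Icc (0:ℤ) ((N:ℤ)-1) = insert (0:ℤ) (Finset.Icc 1 ((N:ℤ)-1)) := by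
    ext x; simp only [Finset.mem_Icc, Finset.mem_insert]; omega
  have m1 : (N:ℤ) ∉ Finset.Icc (1:ℤ) ((N:ℤ)-1) := by simp [Finset.mem_Icc]
  have m2 : (0:ℤ) ∉ Finset.Icc (1:ℤ) ((N:ℤ)-1) := by simp [Finset.mem_Icc]
  simp only [mul_sub]
  rw [Finset.sum_sub_distrib, key, e1, e2, Finset.sum_insert m1, Finset.sum_insert m2,
    hn, h0, mul_zero, mul_zero]
  simp only [zero_add, add_zero]
  rw [← Finset.sum_sub_distrib, ← Finset.sum_neg_distrib]
  exact Finset.sum_congr rfl fun i _ => by ring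

lemma collapse1 (N : ℕ) (a : ℤ → ℝ) (h0 : a 0 = 0) (hn : a (N:ℤ) = 0) :
    ∑ i ∈ Finset.Icc (1:ℤ) (N:ℤ), (a i + a (i-1))
      = 2 * ∑ i ∈ Finset.Icc (1:ℤ) ((N:ℤ)-1), a i := by
  rcases Nat.eq_zero_or_pos N with h|h
  · subst h; simp
  have key : ∑ i ∈ Finset.Icc (1:ℤ) (N:ℤ), a (i-1)
      = ∑ i ∈ Finset.Icc (0:ℤ) ((N:ℤ)-1), a i := by
    simpa using sum_shift 1 (N:ℤ) a
  have e1 : Finset.Icc (1:ℤ) (N:ℤ) = insert (N:ℤ) (Finset.Icc 1 ((N:ℤ)-1)) := by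
    ext x; simp only [Finset.mem_Icc, Finset.mem_insert]; omega
  have e2 : Finset.Icc (0:ℤ) ((N:ℤ)-1) = insert (0:ℤ) (Finset.Icc 1 ((N:ℤ)-1)) := by
    ext x; simp only [Finset.mem_Icc, Finset.mem_insert]; omega
  have m1 : (N:ℤ) ∉ Finset.Icc (1:ℤ) ((N:ℤ)-1) := by simp [Finset.mem_Icc]
  have m2 : (0:ℤ) ∉ Finset.Icc (1:ℤ) ((N:ℤ)-1) := by simp [Finset.mem_Icc]
  rw [Finset.sum_add_distrib, key, e1, e2, Finset.sum_insert m1, Finset.sum_insert m2, hn, h0]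
  ring

lemma dir1 (N : ℕ) (f g : ℤ → ℝ) (hg0 : g 0 = 0) (hgN : g (N:ℤ) = 0) :
    ∑ i ∈ Finset.Icc (1:ℤ) ((N:ℤ)-1), (f (i+1) + f (i-1) - 2 * f i) * g i
      = -∑ i ∈ Finset.Icc (0:ℤ) ((N:ℤ)-1), (f (i+1) - f i) * (g (i+1) - g i) := by
  rcases Nat.eq_zero_or_pos N with h|h
  · subst h; simp
  have key : ∑ i ∈ Finset.Icc (1:ℤ) ((N:ℤ)-1), f (i-1) * g i
      = ∑ i ∈ Finset.Icc (0:ℤ) ((N:ℤ)-2), f i * g (i+1) := by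
    have h1 : ∑ i ∈ Finset.Icc (1:ℤ) ((N:ℤ)-1), f (i-1) * g i
        = ∑ i ∈ Finset.Icc (1:ℤ) ((N:ℤ)-1), (fun i => f i * g (i+1)) (i - 1) := by
      apply Finset.sum_congr rfl; intro i _; simp
    refine h1.trans ((sum_shift 1 ((N:ℤ)-1) (fun i => f i * g (i+1))).trans ?_)
    have e : ((N:ℤ)-1-1) = (N:ℤ)-2 := by ring
    norm_num [e]
  have e1 : Finset.Icc (0:ℤ) ((N:ℤ)-1) = insert (0:ℤ) (Finset.Icc 1 ((N:ℤ)-1)) := by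
    ext x; simp only [Finset.mem_Icc, Finset.mem_insert]; omega
  have e2 : Finset.Icc (0:ℤ) ((N:ℤ)-1) = insert ((N:ℤ)-1) (Finset.Icc 0 ((N:ℤ)-2)) := by
    ext x; simp only [Finset.mem_Icc, Finset.mem_insert]; omega
  have m1 : (0:ℤ) ∉ Finset.Icc (1:ℤ) ((N:ℤ)-1) := by simp [Finset.mem_Icc]
  have m2 : ((N:ℤ)-1) ∉ Finset.Icc (0:ℤ) ((N:ℤ)-2) := by
    simp only [Finset.mem_Icc]; omega
  have lhs : ∑ i ∈ Finset.Icc (1:ℤ) ((N:ℤ)-1), (f (i+1) + f (i-1) - 2 * f i) * g i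
      = (∑ i ∈ Finset.Icc (1:ℤ) ((N:ℤ)-1), (f (i+1) - f i) * g i)
        + ∑ i ∈ Finset.Icc (1:ℤ) ((N:ℤ)-1), f (i-1) * g i
        - ∑ i ∈ Finset.Icc (1:ℤ) ((N:ℤ)-1), f i * g i := by
    rw [← Finset.sum_add_distrib, ← Finset.sum_sub_distrib]
    exact Finset.sum_congr rfl fun i _ => by ring
  rw [lhs, key]
  have r1 : ∑ i ∈ Finset.Icc (1:ℤ) ((N:ℤ)-1), (f (i+1) - f i) * g i
      = ∑ i ∈ Finset.Icc (0:ℤ) ((N:ℤ)-1), (f (i+1) - f i) * g i := by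
    rw [e1, Finset.sum_insert m1, hg0, mul_zero, zero_add]
  have r2 : ∑ i ∈ Finset.Icc (0:ℤ) ((N:ℤ)-2), f i * g (i+1)
      = ∑ i ∈ Finset.Icc (0:ℤ) ((N:ℤ)-1), f i * g (i+1) := by
    rw [e2, Finset.sum_insert m2]
    have : g ((N:ℤ)-1+1) = 0 := by rw [show (N:ℤ)-1+1 = (N:ℤ) by ring, hgN]
    rw [this, mul_zero, zero_add]
  have r3 : ∑ i ∈ Finset.Icc (1:ℤ) ((N:ℤ)-1), f i * g i
      = ∑ i ∈ Finset.Icc (0:ℤ) ((N:ℤ)-1), f i * g i := by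
    rw [e1, Finset.sum_insert m1, hg0, mul_zero, zero_add]
  have r4 : ∑ i ∈ Finset.Icc (0:ℤ) ((N:ℤ)-1), f (i+1) * g (i+1)
      = ∑ i ∈ Finset.Icc (0:ℤ) ((N:ℤ)-1), f i * g i := by
    have h1 : ∑ i ∈ Finset.Icc (1:ℤ) (N:ℤ), f i * g i
        = ∑ i ∈ Finset.Icc (1:ℤ) (N:ℤ), (fun i => f (i+1) * g (i+1)) (i - 1) := by
      apply Finset.sum_congr rfl; intro i _; simp
    have h2 := h1.trans (sum_shift 1 (N:ℤ) (fun i => f (i+1) * g (i+1)))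
    have e3 : Finset.Icc (1:ℤ) (N:ℤ) = insert (N:ℤ) (Finset.Icc 1 ((N:ℤ)-1)) := by
      ext x; simp only [Finset.mem_Icc, Finset.mem_insert]; omega
    have m3 : (N:ℤ) ∉ Finset.Icc (1:ℤ) ((N:ℤ)-1) := by simp [Finset.mem_Icc]
    have l1 : ∑ i ∈ Finset.Icc (1:ℤ) (N:ℤ), f i * g i
        = ∑ i ∈ Finset.Icc (1:ℤ) ((N:ℤ)-1), f i * g i := by
      rw [e3, Finset.sum_insert m3, hgN, mul_zero, zero_add]
    rw [show (1:ℤ)-1 = 0 by ring] at h2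
    rw [← h2, l1, r3]
  have E : (∑ i ∈ Finset.Icc (0:ℤ) ((N:ℤ)-1), (f (i+1) - f i) * g i)
      + (∑ i ∈ Finset.Icc (0:ℤ) ((N:ℤ)-1), f i * g (i+1))
      - (∑ i ∈ Finset.Icc (0:ℤ) ((N:ℤ)-1), f i * g i)
      - ((∑ i ∈ Finset.Icc (0:ℤ) ((N:ℤ)-1), f (i+1) * g (i+1))
          - (∑ i ∈ Finset.Icc (0:ℤ) ((N:ℤ)-1), f i * g i))
      = -∑ i ∈ Finset.Icc (0:ℤ) ((N:ℤ)-1), (f (i+1) - f i) * (g (i+1) - g i) := by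
    rw [← Finset.sum_neg_distrib]
    simp only [← Finset.sum_add_distrib, ← Finset.sum_sub_distrib]
    exact Finset.sum_congr rfl fun i _ => by ring
  rw [r1, r2, r3]
  linarith [E, r4]

lemma neu1 (N : ℕ) (F G : ℤ → ℝ) (hF0 : F 0 = F 1) (hFN : F ((N:ℤ)+1) = F (N:ℤ)) :
    ∑ j ∈ Finset.Icc (1:ℤ) (N:ℤ), (F (j+1) + F (j-1) - 2 * F j) * G j
      = -∑ j ∈ Finset.Icc (1:ℤ) ((N:ℤ)-1), (G (j+1) - G j) * (F (j+1) - F j) := by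
  have h0 : F (0+1) - F 0 = 0 := by simp [hF0]
  have hn : F ((N:ℤ)+1) - F (N:ℤ) = 0 := by simp [hFN]
  have key := abel1 N G (fun j => F (j+1) - F j) h0 hn
  refine Eq.trans ?_ key
  apply Finset.sum_congr rfl
  intro j _
  have : (j:ℤ) - 1 + 1 = j := by ring
  show (F (j+1) + F (j-1) - 2 * F j) * G j = G j * ((F (j+1) - F j) - (F (j-1+1) - F (j-1)))
  rw [this]; ring


/-! ### Clamp and grid lemmas -/

lemma clamp_id {N : ℕ} {i : ℤ} (h1 : 1 ≤ i) (h2 : i ≤ (N:ℤ)) : clampIdx N i = i := by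
  unfold clampIdx; omega

lemma clamp_zero (N : ℕ) : clampIdx N 0 = 1 := by
  unfold clampIdx; omega

lemma clamp_one (N : ℕ) : clampIdx N 1 = 1 := by
  unfold clampIdx; omega

lemma clamp_top {N : ℕ} (hN : 0 < N) : clampIdx N ((N:ℤ)+1) = (N:ℤ) := by
  unfold clampIdx; omega

lemma clamp_N {N : ℕ} (hN : 0 < N) : clampIdx N (N:ℤ) = (N:ℤ) := by
  unfold clampIdx; omega

lemma mem_cell {N : ℕ} {i : ℤ} : i ∈ cellIdx N ↔ 1 ≤ i ∧ i ≤ (N:ℤ) := by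
  simp [cellIdx, Finset.mem_Icc]

lemma mem_face {N : ℕ} {i : ℤ} : i ∈ faceIdx N ↔ 1 ≤ i ∧ i ≤ (N:ℤ)-1 := by
  simp [faceIdx, Finset.mem_Icc]

lemma nExt_eq {N : ℕ} (φ : ℤ → ℤ → ℤ → ℝ) {i j k : ℤ}
    (hi : i ∈ cellIdx N) (hj : j ∈ cellIdx N) (hk : k ∈ cellIdx N) :
    nExt N φ i j k = φ i j k := by
  obtain ⟨hi1, hi2⟩ := mem_cell.mp hi
  obtain ⟨hj1, hj2⟩ := mem_cell.mp hj
  obtain ⟨hk1, hk2⟩ := mem_cell.mp hk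
  unfold nExt
  rw [clamp_id hi1 hi2, clamp_id hj1 hj2, clamp_id hk1 hk2]

/-! ### Triple sums -/

def S3 (A B C : Finset ℤ) (F : ℤ → ℤ → ℤ → ℝ) : ℝ :=
  ∑ i ∈ A, ∑ j ∈ B, ∑ k ∈ C, F i j k

lemma S3_congr {A B C : Finset ℤ} {F G : ℤ → ℤ → ℤ → ℝ}
    (h : ∀ i ∈ A, ∀ j ∈ B, ∀ k ∈ C, F i j k = G i j k) : S3 A B C F = S3 A B C G :=
  Finset.sum_congr rfl fun i hi => Finset.sum_congr rfl fun j hj =>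
    Finset.sum_congr rfl fun k hk => h i hi j hj k hk

lemma S3_add {A B C : Finset ℤ} {F G : ℤ → ℤ → ℤ → ℝ} :
    S3 A B C (fun i j k => F i j k + G i j k) = S3 A B C F + S3 A B C G := by
  simp [S3, Finset.sum_add_distrib]

lemma S3_sub {A B C : Finset ℤ} {F G : ℤ → ℤ → ℤ → ℝ} :
    S3 A B C (fun i j k => F i j k - G i j k) = S3 A B C F - S3 A B C G := by
  simp [S3, Finset.sum_sub_distrib]

lemma S3_mul {A B C : Finset ℤ} (c : ℝ) {F : ℤ → ℤ → ℤ → ℝ} :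
    S3 A B C (fun i j k => c * F i j k) = c * S3 A B C F := by
  simp [S3, Finset.mul_sum]

lemma S3_rot {A B C : Finset ℤ} {F : ℤ → ℤ → ℤ → ℝ} :
    S3 A B C F = ∑ j ∈ B, ∑ k ∈ C, ∑ i ∈ A, F i j k := by
  rw [S3, Finset.sum_comm]
  exact Finset.sum_congr rfl fun j _ => Finset.sum_comm

lemma S3_swap23 {A B C : Finset ℤ} {F : ℤ → ℤ → ℤ → ℝ} :
    S3 A B C F = ∑ i ∈ A, ∑ k ∈ C, ∑ j ∈ B, F i j k :=
  Finset.sum_congr rfl fun i _ => Finset.sum_comm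

/-! ### 3D summation by parts -/


lemma divx3 (N : ℕ) (μ v : ℤ → ℤ → ℤ → ℝ)
    (hv : ∀ j ∈ cellIdx N, ∀ k ∈ cellIdx N, v 0 j k = 0 ∧ v (N:ℤ) j k = 0) :
    S3 (cellIdx N) (cellIdx N) (cellIdx N) (fun i j k => μ i j k * (v i j k - v (i-1) j k))
      = -S3 (faceIdx N) (cellIdx N) (cellIdx N)
          (fun i j k => (μ (i+1) j k - μ i j k) * v i j k) := by
  have e : S3 (faceIdx N) (cellIdx N) (cellIdx N)
      (fun i j k => (μ (i+1) j k - μ i j k) * v i j k)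
      = ∑ j ∈ cellIdx N, ∑ k ∈ cellIdx N, ∑ i ∈ faceIdx N,
          (μ (i+1) j k - μ i j k) * v i j k := S3_rot
  rw [e, S3_rot, ← Finset.sum_neg_distrib]
  refine Finset.sum_congr rfl fun j hj => ?_
  rw [← Finset.sum_neg_distrib]
  refine Finset.sum_congr rfl fun k hk => ?_
  exact abel1 N (fun i => μ i j k) (fun i => v i j k) (hv j hj k hk).1 (hv j hj k hk).2

lemma divy3 (N : ℕ) (μ v : ℤ → ℤ → ℤ → ℝ)
    (hv : ∀ i ∈ cellIdx N, ∀ k ∈ cellIdx N, v i 0 k = 0 ∧ v i (N:ℤ) k = 0) :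
    S3 (cellIdx N) (cellIdx N) (cellIdx N) (fun i j k => μ i j k * (v i j k - v i (j-1) k))
      = -S3 (cellIdx N) (faceIdx N) (cellIdx N)
          (fun i j k => (μ i (j+1) k - μ i j k) * v i j k) := by
  have e : S3 (cellIdx N) (faceIdx N) (cellIdx N)
      (fun i j k => (μ i (j+1) k - μ i j k) * v i j k)
      = ∑ i ∈ cellIdx N, ∑ k ∈ cellIdx N, ∑ j ∈ faceIdx N,
          (μ i (j+1) k - μ i j k) * v i j k := S3_swap23
  rw [e, S3_swap23, ← Finset.sum_neg_distrib]
  refine Finset.sum_congr rfl fun i hi => ?_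
  rw [← Finset.sum_neg_distrib]
  refine Finset.sum_congr rfl fun k hk => ?_
  exact abel1 N (fun j => μ i j k) (fun j => v i j k) (hv i hi k hk).1 (hv i hi k hk).2

lemma divz3 (N : ℕ) (μ v : ℤ → ℤ → ℤ → ℝ)
    (hv : ∀ i ∈ cellIdx N, ∀ j ∈ cellIdx N, v i j 0 = 0 ∧ v i j (N:ℤ) = 0) :
    S3 (cellIdx N) (cellIdx N) (cellIdx N) (fun i j k => μ i j k * (v i j k - v i j (k-1)))
      = -S3 (cellIdx N) (cellIdx N) (faceIdx N)
          (fun i j k => (μ i j (k+1) - μ i j k) * v i j k) := by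
  rw [S3, S3, ← Finset.sum_neg_distrib]
  refine Finset.sum_congr rfl fun i hi => ?_
  rw [← Finset.sum_neg_distrib]
  refine Finset.sum_congr rfl fun j hj => ?_
  exact abel1 N (fun k => μ i j k) (fun k => v i j k) (hv i hi j hj).1 (hv i hi j hj).2


/-! ### Difference operators on interior faces -/

lemma Dx_int {N : ℕ} (h : ℝ) (μ : ℤ → ℤ → ℤ → ℝ) {i j k : ℤ}
    (hi : i ∈ faceIdx N) (hj : j ∈ cellIdx N) (hk : k ∈ cellIdx N) :
    Dx N h μ i j k = (μ (i+1) j k - μ i j k) / h := by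
  obtain ⟨hi1, hi2⟩ := mem_face.mp hi
  obtain ⟨hj1, hj2⟩ := mem_cell.mp hj
  obtain ⟨hk1, hk2⟩ := mem_cell.mp hk
  unfold Dx nExt
  rw [clamp_id hi1 (by omega), clamp_id (by omega : (1:ℤ) ≤ i + 1) (by omega),
    clamp_id hj1 hj2, clamp_id hk1 hk2]

lemma Dy_int {N : ℕ} (h : ℝ) (μ : ℤ → ℤ → ℤ → ℝ) {i j k : ℤ}
    (hi : i ∈ cellIdx N) (hj : j ∈ faceIdx N) (hk : k ∈ cellIdx N) :
    Dy N h μ i j k = (μ i (j+1) k - μ i j k) / h := by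
  obtain ⟨hi1, hi2⟩ := mem_cell.mp hi
  obtain ⟨hj1, hj2⟩ := mem_face.mp hj
  obtain ⟨hk1, hk2⟩ := mem_cell.mp hk
  unfold Dy nExt
  rw [clamp_id hi1 hi2, clamp_id hj1 (by omega), clamp_id (by omega : (1:ℤ) ≤ j + 1) (by omega),
    clamp_id hk1 hk2]

lemma Dz_int {N : ℕ} (h : ℝ) (μ : ℤ → ℤ → ℤ → ℝ) {i j k : ℤ}
    (hi : i ∈ cellIdx N) (hj : j ∈ cellIdx N) (hk : k ∈ faceIdx N) :
    Dz N h μ i j k = (μ i j (k+1) - μ i j k) / h := by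
  obtain ⟨hi1, hi2⟩ := mem_cell.mp hi
  obtain ⟨hj1, hj2⟩ := mem_cell.mp hj
  obtain ⟨hk1, hk2⟩ := mem_face.mp hk
  unfold Dz nExt
  rw [clamp_id hi1 hi2, clamp_id hj1 hj2, clamp_id hk1 (by omega),
    clamp_id (by omega : (1:ℤ) ≤ k + 1) (by omega)]

lemma Dx_bdry0 {N : ℕ} (h : ℝ) (μ : ℤ → ℤ → ℤ → ℝ) (j k : ℤ) :
    Dx N h μ 0 j k = 0 := by
  unfold Dx nExt
  rw [show (0:ℤ)+1 = 1 from rfl, clamp_zero, clamp_one]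
  simp

lemma Dx_bdryN {N : ℕ} (hN : 0 < N) (h : ℝ) (μ : ℤ → ℤ → ℤ → ℝ) (j k : ℤ) :
    Dx N h μ (N:ℤ) j k = 0 := by
  unfold Dx nExt
  rw [clamp_top hN, clamp_N hN]
  simp

lemma Dy_bdry0 {N : ℕ} (h : ℝ) (μ : ℤ → ℤ → ℤ → ℝ) (i k : ℤ) :
    Dy N h μ i 0 k = 0 := by
  unfold Dy nExt
  rw [show (0:ℤ)+1 = 1 from rfl, clamp_zero, clamp_one]
  simp

lemma Dy_bdryN {N : ℕ} (hN : 0 < N) (h : ℝ) (μ : ℤ → ℤ → ℤ → ℝ) (i k : ℤ) :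
    Dy N h μ i (N:ℤ) k = 0 := by
  unfold Dy nExt
  rw [clamp_top hN, clamp_N hN]
  simp

lemma Dz_bdry0 {N : ℕ} (h : ℝ) (μ : ℤ → ℤ → ℤ → ℝ) (i j : ℤ) :
    Dz N h μ i j 0 = 0 := by
  unfold Dz nExt
  rw [show (0:ℤ)+1 = 1 from rfl, clamp_zero, clamp_one]
  simp

lemma Dz_bdryN {N : ℕ} (hN : 0 < N) (h : ℝ) (μ : ℤ → ℤ → ℤ → ℝ) (i j : ℤ) :
    Dz N h μ i j (N:ℤ) = 0 := by
  unfold Dz nExt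
  rw [clamp_top hN, clamp_N hN]
  simp

/-! ### Face inner products as interior sums -/

lemma collapse1' (N : ℕ) (a : ℤ → ℝ) (h0 : a 0 = 0) (hn : a (N:ℤ) = 0) :
    ∑ i ∈ cellIdx N, (a i + a (i-1)) = 2 * ∑ i ∈ faceIdx N, a i :=
  collapse1 N a h0 hn

lemma ipFX_collapse (N : ℕ) (h : ℝ) (f g : ℤ → ℤ → ℤ → ℝ)
    (hb : ∀ j ∈ cellIdx N, ∀ k ∈ cellIdx N,
      f 0 j k * g 0 j k = 0 ∧ f (N:ℤ) j k * g (N:ℤ) j k = 0) :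
    ipFX N h f g
      = h^3 * S3 (faceIdx N) (cellIdx N) (cellIdx N) (fun i j k => f i j k * g i j k) := by
  unfold ipFX
  have key : ∑ i ∈ cellIdx N, ∑ j ∈ cellIdx N, ∑ k ∈ cellIdx N,
      (f i j k * g i j k + f (i-1) j k * g (i-1) j k)
      = ∑ i ∈ cellIdx N, ((fun i => ∑ j ∈ cellIdx N, ∑ k ∈ cellIdx N, f i j k * g i j k) i
          + (fun i => ∑ j ∈ cellIdx N, ∑ k ∈ cellIdx N, f i j k * g i j k) (i-1)) := by
    refine Finset.sum_congr rfl fun i _ => ?_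
    simp [Finset.sum_add_distrib]
  have hz1 : (fun i => ∑ j ∈ cellIdx N, ∑ k ∈ cellIdx N, f i j k * g i j k) 0 = 0 :=
    Finset.sum_eq_zero fun j hj => Finset.sum_eq_zero fun k hk => (hb j hj k hk).1
  have hz2 : (fun i => ∑ j ∈ cellIdx N, ∑ k ∈ cellIdx N, f i j k * g i j k) (N:ℤ) = 0 :=
    Finset.sum_eq_zero fun j hj => Finset.sum_eq_zero fun k hk => (hb j hj k hk).2
  rw [key, collapse1' N _ hz1 hz2, S3]
  ring

lemma ipFY_collapse (N : ℕ) (h : ℝ) (f g : ℤ → ℤ → ℤ → ℝ)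
    (hb : ∀ i ∈ cellIdx N, ∀ k ∈ cellIdx N,
      f i 0 k * g i 0 k = 0 ∧ f i (N:ℤ) k * g i (N:ℤ) k = 0) :
    ipFY N h f g
      = h^3 * S3 (cellIdx N) (faceIdx N) (cellIdx N) (fun i j k => f i j k * g i j k) := by
  unfold ipFY
  have key : ∀ i ∈ cellIdx N, ∑ j ∈ cellIdx N, ∑ k ∈ cellIdx N,
      (f i j k * g i j k + f i (j-1) k * g i (j-1) k)
      = 2 * ∑ j ∈ faceIdx N, ∑ k ∈ cellIdx N, f i j k * g i j k := by
    intro i hi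
    have e : ∑ j ∈ cellIdx N, ∑ k ∈ cellIdx N,
        (f i j k * g i j k + f i (j-1) k * g i (j-1) k)
        = ∑ j ∈ cellIdx N, ((fun j => ∑ k ∈ cellIdx N, f i j k * g i j k) j
            + (fun j => ∑ k ∈ cellIdx N, f i j k * g i j k) (j-1)) := by
      refine Finset.sum_congr rfl fun j _ => ?_
      simp [Finset.sum_add_distrib]
    rw [e]
    exact collapse1' N (fun j => ∑ k ∈ cellIdx N, f i j k * g i j k)
      (Finset.sum_eq_zero fun k hk => (hb i hi k hk).1)
      (Finset.sum_eq_zero fun k hk => (hb i hi k hk).2)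
  rw [Finset.sum_congr rfl key, ← Finset.mul_sum, S3]
  ring

lemma ipFZ_collapse (N : ℕ) (h : ℝ) (f g : ℤ → ℤ → ℤ → ℝ)
    (hb : ∀ i ∈ cellIdx N, ∀ j ∈ cellIdx N,
      f i j 0 * g i j 0 = 0 ∧ f i j (N:ℤ) * g i j (N:ℤ) = 0) :
    ipFZ N h f g
      = h^3 * S3 (cellIdx N) (cellIdx N) (faceIdx N) (fun i j k => f i j k * g i j k) := by
  unfold ipFZ
  have key2 : ∀ i ∈ cellIdx N, ∑ j ∈ cellIdx N, ∑ k ∈ cellIdx N,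
      (f i j k * g i j k + f i j (k-1) * g i j (k-1))
      = 2 * ∑ j ∈ cellIdx N, ∑ k ∈ faceIdx N, f i j k * g i j k := by
    intro i hi
    have key : ∀ j ∈ cellIdx N, ∑ k ∈ cellIdx N,
        (f i j k * g i j k + f i j (k-1) * g i j (k-1))
        = 2 * ∑ k ∈ faceIdx N, f i j k * g i j k := fun j hj =>
      collapse1' N (fun k => f i j k * g i j k) (hb i hi j hj).1 (hb i hi j hj).2
    rw [Finset.sum_congr rfl key, ← Finset.mul_sum]
  rw [Finset.sum_congr rfl key2, ← Finset.mul_sum, S3]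
  ring


/-! ### Face Laplacian summation by parts -/

lemma lapFX_sum (N : ℕ) (hN : 0 < N) (h : ℝ) (hh : h ≠ 0) (f g : ℤ → ℤ → ℤ → ℝ)
    (hg : ∀ j ∈ cellIdx N, ∀ k ∈ cellIdx N, g 0 j k = 0 ∧ g (N:ℤ) j k = 0) :
    S3 (faceIdx N) (cellIdx N) (cellIdx N) (fun i j k => (-lapFX N h f i j k) * g i j k)
      = (1/h^2) * (
        (∑ j ∈ cellIdx N, ∑ k ∈ cellIdx N, ∑ i ∈ Finset.Icc (0:ℤ) ((N:ℤ)-1),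
            (f (i+1) j k - f i j k) * (g (i+1) j k - g i j k))
        + (∑ i ∈ faceIdx N, ∑ k ∈ cellIdx N, ∑ j ∈ faceIdx N,
            (g i (j+1) k - g i j k) * (f i (j+1) k - f i j k))
        + (∑ i ∈ faceIdx N, ∑ j ∈ cellIdx N, ∑ k ∈ faceIdx N,
            (g i j (k+1) - g i j k) * (f i j (k+1) - f i j k))) := by
  have split : S3 (faceIdx N) (cellIdx N) (cellIdx N)
        (fun i j k => (-lapFX N h f i j k) * g i j k)
      = (-(1/h^2)) * S3 (faceIdx N) (cellIdx N) (cellIdx N)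
          (fun i j k => (f (i+1) j k + f (i-1) j k - 2*f i j k) * g i j k)
        + ((-(1/h^2)) * S3 (faceIdx N) (cellIdx N) (cellIdx N)
          (fun i j k => (f i (clampIdx N (j+1)) k + f i (clampIdx N (j-1)) k
              - 2*f i j k) * g i j k)
        + (-(1/h^2)) * S3 (faceIdx N) (cellIdx N) (cellIdx N)
          (fun i j k => (f i j (clampIdx N (k+1)) + f i j (clampIdx N (k-1))
              - 2*f i j k) * g i j k)) := by
    rw [← S3_mul, ← S3_mul, ← S3_mul, ← S3_add, ← S3_add]
    apply S3_congr
    intro i hi j hj k hk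
    obtain ⟨hj1, hj2⟩ := mem_cell.mp hj
    obtain ⟨hk1, hk2⟩ := mem_cell.mp hk
    unfold lapFX fExtX
    rw [clamp_id hj1 hj2, clamp_id hk1 hk2]
    field_simp
    ring
  have t1 : S3 (faceIdx N) (cellIdx N) (cellIdx N)
        (fun i j k => (f (i+1) j k + f (i-1) j k - 2*f i j k) * g i j k)
      = -∑ j ∈ cellIdx N, ∑ k ∈ cellIdx N, ∑ i ∈ Finset.Icc (0:ℤ) ((N:ℤ)-1),
          (f (i+1) j k - f i j k) * (g (i+1) j k - g i j k) := by
    rw [S3_rot, ← Finset.sum_neg_distrib]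
    refine Finset.sum_congr rfl fun j hj => ?_
    rw [← Finset.sum_neg_distrib]
    refine Finset.sum_congr rfl fun k hk => ?_
    exact dir1 N (fun i => f i j k) (fun i => g i j k) (hg j hj k hk).1 (hg j hj k hk).2
  have t2 : S3 (faceIdx N) (cellIdx N) (cellIdx N)
        (fun i j k => (f i (clampIdx N (j+1)) k + f i (clampIdx N (j-1)) k
            - 2*f i j k) * g i j k)
      = -∑ i ∈ faceIdx N, ∑ k ∈ cellIdx N, ∑ j ∈ faceIdx N,
          (g i (j+1) k - g i j k) * (f i (j+1) k - f i j k) := by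
    rw [S3_swap23, ← Finset.sum_neg_distrib]
    refine Finset.sum_congr rfl fun i hi => ?_
    rw [← Finset.sum_neg_distrib]
    refine Finset.sum_congr rfl fun k hk => ?_
    have base := neu1 N (fun t => f i (clampIdx N t) k) (fun t => g i t k)
      (by simp [clamp_zero, clamp_one]) (by simp [clamp_top hN, clamp_N hN])
    calc ∑ j ∈ cellIdx N, (f i (clampIdx N (j+1)) k + f i (clampIdx N (j-1)) k
            - 2*f i j k) * g i j k
        = ∑ j ∈ cellIdx N, (f i (clampIdx N (j+1)) k + f i (clampIdx N (j-1)) k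
            - 2*f i (clampIdx N j) k) * g i j k := by
          refine Finset.sum_congr rfl fun j hj => ?_
          obtain ⟨hj1, hj2⟩ := mem_cell.mp hj
          rw [clamp_id hj1 hj2]
      _ = -∑ j ∈ Finset.Icc (1:ℤ) ((N:ℤ)-1), (g i (j+1) k - g i j k)
            * (f i (clampIdx N (j+1)) k - f i (clampIdx N j) k) := base
      _ = -∑ j ∈ faceIdx N, (g i (j+1) k - g i j k) * (f i (j+1) k - f i j k) := by
          congr 1
          refine Finset.sum_congr rfl fun j hj => ?_
          obtain ⟨hj1, hj2⟩ := mem_face.mp hj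
          rw [clamp_id hj1 (by omega), clamp_id (by omega : (1:ℤ) ≤ j+1) (by omega)]
  have t3 : S3 (faceIdx N) (cellIdx N) (cellIdx N)
        (fun i j k => (f i j (clampIdx N (k+1)) + f i j (clampIdx N (k-1))
            - 2*f i j k) * g i j k)
      = -∑ i ∈ faceIdx N, ∑ j ∈ cellIdx N, ∑ k ∈ faceIdx N,
          (g i j (k+1) - g i j k) * (f i j (k+1) - f i j k) := by
    rw [S3, ← Finset.sum_neg_distrib]
    refine Finset.sum_congr rfl fun i hi => ?_
    rw [← Finset.sum_neg_distrib]
    refine Finset.sum_congr rfl fun j hj => ?_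
    have base := neu1 N (fun t => f i j (clampIdx N t)) (fun t => g i j t)
      (by simp [clamp_zero, clamp_one]) (by simp [clamp_top hN, clamp_N hN])
    calc ∑ k ∈ cellIdx N, (f i j (clampIdx N (k+1)) + f i j (clampIdx N (k-1))
            - 2*f i j k) * g i j k
        = ∑ k ∈ cellIdx N, (f i j (clampIdx N (k+1)) + f i j (clampIdx N (k-1))
            - 2*f i j (clampIdx N k)) * g i j k := by
          refine Finset.sum_congr rfl fun k hk => ?_
          obtain ⟨hk1, hk2⟩ := mem_cell.mp hk
          rw [clamp_id hk1 hk2]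
      _ = -∑ k ∈ Finset.Icc (1:ℤ) ((N:ℤ)-1), (g i j (k+1) - g i j k)
            * (f i j (clampIdx N (k+1)) - f i j (clampIdx N k)) := base
      _ = -∑ k ∈ faceIdx N, (g i j (k+1) - g i j k) * (f i j (k+1) - f i j k) := by
          congr 1
          refine Finset.sum_congr rfl fun k hk => ?_
          obtain ⟨hk1, hk2⟩ := mem_face.mp hk
          rw [clamp_id hk1 (by omega), clamp_id (by omega : (1:ℤ) ≤ k+1) (by omega)]
  rw [split, t1, t2, t3]
  ring


lemma lapFY_sum (N : ℕ) (hN : 0 < N) (h : ℝ) (hh : h ≠ 0) (f g : ℤ → ℤ → ℤ → ℝ)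
    (hg : ∀ i ∈ cellIdx N, ∀ k ∈ cellIdx N, g i 0 k = 0 ∧ g i (N:ℤ) k = 0) :
    S3 (cellIdx N) (faceIdx N) (cellIdx N) (fun i j k => (-lapFY N h f i j k) * g i j k)
      = (1/h^2) * (
        (∑ i ∈ cellIdx N, ∑ k ∈ cellIdx N, ∑ j ∈ Finset.Icc (0:ℤ) ((N:ℤ)-1),
            (f i (j+1) k - f i j k) * (g i (j+1) k - g i j k))
        + (∑ j ∈ faceIdx N, ∑ k ∈ cellIdx N, ∑ i ∈ faceIdx N,
            (g (i+1) j k - g i j k) * (f (i+1) j k - f i j k))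
        + (∑ i ∈ cellIdx N, ∑ j ∈ faceIdx N, ∑ k ∈ faceIdx N,
            (g i j (k+1) - g i j k) * (f i j (k+1) - f i j k))) := by
  have split : S3 (cellIdx N) (faceIdx N) (cellIdx N)
        (fun i j k => (-lapFY N h f i j k) * g i j k)
      = (-(1/h^2)) * S3 (cellIdx N) (faceIdx N) (cellIdx N)
          (fun i j k => (f i (j+1) k + f i (j-1) k - 2*f i j k) * g i j k)
        + ((-(1/h^2)) * S3 (cellIdx N) (faceIdx N) (cellIdx N)
          (fun i j k => (f (clampIdx N (i+1)) j k + f (clampIdx N (i-1)) j k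
              - 2*f i j k) * g i j k)
        + (-(1/h^2)) * S3 (cellIdx N) (faceIdx N) (cellIdx N)
          (fun i j k => (f i j (clampIdx N (k+1)) + f i j (clampIdx N (k-1))
              - 2*f i j k) * g i j k)) := by
    rw [← S3_mul, ← S3_mul, ← S3_mul, ← S3_add, ← S3_add]
    apply S3_congr
    intro i hi j hj k hk
    obtain ⟨hi1, hi2⟩ := mem_cell.mp hi
    obtain ⟨hk1, hk2⟩ := mem_cell.mp hk
    unfold lapFY fExtY
    rw [clamp_id hi1 hi2, clamp_id hk1 hk2]
    field_simp
    ring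
  have t1 : S3 (cellIdx N) (faceIdx N) (cellIdx N)
        (fun i j k => (f i (j+1) k + f i (j-1) k - 2*f i j k) * g i j k)
      = -∑ i ∈ cellIdx N, ∑ k ∈ cellIdx N, ∑ j ∈ Finset.Icc (0:ℤ) ((N:ℤ)-1),
          (f i (j+1) k - f i j k) * (g i (j+1) k - g i j k) := by
    rw [S3_swap23, ← Finset.sum_neg_distrib]
    refine Finset.sum_congr rfl fun i hi => ?_
    rw [← Finset.sum_neg_distrib]
    refine Finset.sum_congr rfl fun k hk => ?_
    exact dir1 N (fun j => f i j k) (fun j => g i j k) (hg i hi k hk).1 (hg i hi k hk).2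
  have t2 : S3 (cellIdx N) (faceIdx N) (cellIdx N)
        (fun i j k => (f (clampIdx N (i+1)) j k + f (clampIdx N (i-1)) j k
            - 2*f i j k) * g i j k)
      = -∑ j ∈ faceIdx N, ∑ k ∈ cellIdx N, ∑ i ∈ faceIdx N,
          (g (i+1) j k - g i j k) * (f (i+1) j k - f i j k) := by
    rw [S3_rot, ← Finset.sum_neg_distrib]
    refine Finset.sum_congr rfl fun j hj => ?_
    rw [← Finset.sum_neg_distrib]
    refine Finset.sum_congr rfl fun k hk => ?_
    have base := neu1 N (fun t => f (clampIdx N t) j k) (fun t => g t j k)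
      (by simp [clamp_zero, clamp_one]) (by simp [clamp_top hN, clamp_N hN])
    calc ∑ i ∈ cellIdx N, (f (clampIdx N (i+1)) j k + f (clampIdx N (i-1)) j k
            - 2*f i j k) * g i j k
        = ∑ i ∈ cellIdx N, (f (clampIdx N (i+1)) j k + f (clampIdx N (i-1)) j k
            - 2*f (clampIdx N i) j k) * g i j k := by
          refine Finset.sum_congr rfl fun i hi => ?_
          obtain ⟨hi1, hi2⟩ := mem_cell.mp hi
          rw [clamp_id hi1 hi2]
      _ = -∑ i ∈ Finset.Icc (1:ℤ) ((N:ℤ)-1), (g (i+1) j k - g i j k)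
            * (f (clampIdx N (i+1)) j k - f (clampIdx N i) j k) := base
      _ = -∑ i ∈ faceIdx N, (g (i+1) j k - g i j k) * (f (i+1) j k - f i j k) := by
          congr 1
          refine Finset.sum_congr rfl fun i hi => ?_
          obtain ⟨hi1, hi2⟩ := mem_face.mp hi
          rw [clamp_id hi1 (by omega), clamp_id (by omega : (1:ℤ) ≤ i+1) (by omega)]
  have t3 : S3 (cellIdx N) (faceIdx N) (cellIdx N)
        (fun i j k => (f i j (clampIdx N (k+1)) + f i j (clampIdx N (k-1))
            - 2*f i j k) * g i j k)
      = -∑ i ∈ cellIdx N, ∑ j ∈ faceIdx N, ∑ k ∈ faceIdx N,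
          (g i j (k+1) - g i j k) * (f i j (k+1) - f i j k) := by
    rw [S3, ← Finset.sum_neg_distrib]
    refine Finset.sum_congr rfl fun i hi => ?_
    rw [← Finset.sum_neg_distrib]
    refine Finset.sum_congr rfl fun j hj => ?_
    have base := neu1 N (fun t => f i j (clampIdx N t)) (fun t => g i j t)
      (by simp [clamp_zero, clamp_one]) (by simp [clamp_top hN, clamp_N hN])
    calc ∑ k ∈ cellIdx N, (f i j (clampIdx N (k+1)) + f i j (clampIdx N (k-1))
            - 2*f i j k) * g i j k
        = ∑ k ∈ cellIdx N, (f i j (clampIdx N (k+1)) + f i j (clampIdx N (k-1))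
            - 2*f i j (clampIdx N k)) * g i j k := by
          refine Finset.sum_congr rfl fun k hk => ?_
          obtain ⟨hk1, hk2⟩ := mem_cell.mp hk
          rw [clamp_id hk1 hk2]
      _ = -∑ k ∈ Finset.Icc (1:ℤ) ((N:ℤ)-1), (g i j (k+1) - g i j k)
            * (f i j (clampIdx N (k+1)) - f i j (clampIdx N k)) := base
      _ = -∑ k ∈ faceIdx N, (g i j (k+1) - g i j k) * (f i j (k+1) - f i j k) := by
          congr 1
          refine Finset.sum_congr rfl fun k hk => ?_
          obtain ⟨hk1, hk2⟩ := mem_face.mp hk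
          rw [clamp_id hk1 (by omega), clamp_id (by omega : (1:ℤ) ≤ k+1) (by omega)]
  rw [split, t1, t2, t3]
  ring

lemma lapFZ_sum (N : ℕ) (hN : 0 < N) (h : ℝ) (hh : h ≠ 0) (f g : ℤ → ℤ → ℤ → ℝ)
    (hg : ∀ i ∈ cellIdx N, ∀ j ∈ cellIdx N, g i j 0 = 0 ∧ g i j (N:ℤ) = 0) :
    S3 (cellIdx N) (cellIdx N) (faceIdx N) (fun i j k => (-lapFZ N h f i j k) * g i j k)
      = (1/h^2) * (
        (∑ i ∈ cellIdx N, ∑ j ∈ cellIdx N, ∑ k ∈ Finset.Icc (0:ℤ) ((N:ℤ)-1),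
            (f i j (k+1) - f i j k) * (g i j (k+1) - g i j k))
        + (∑ j ∈ cellIdx N, ∑ k ∈ faceIdx N, ∑ i ∈ faceIdx N,
            (g (i+1) j k - g i j k) * (f (i+1) j k - f i j k))
        + (∑ i ∈ cellIdx N, ∑ k ∈ faceIdx N, ∑ j ∈ faceIdx N,
            (g i (j+1) k - g i j k) * (f i (j+1) k - f i j k))) := by
  have split : S3 (cellIdx N) (cellIdx N) (faceIdx N)
        (fun i j k => (-lapFZ N h f i j k) * g i j k)
      = (-(1/h^2)) * S3 (cellIdx N) (cellIdx N) (faceIdx N)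
          (fun i j k => (f i j (k+1) + f i j (k-1) - 2*f i j k) * g i j k)
        + ((-(1/h^2)) * S3 (cellIdx N) (cellIdx N) (faceIdx N)
          (fun i j k => (f (clampIdx N (i+1)) j k + f (clampIdx N (i-1)) j k
              - 2*f i j k) * g i j k)
        + (-(1/h^2)) * S3 (cellIdx N) (cellIdx N) (faceIdx N)
          (fun i j k => (f i (clampIdx N (j+1)) k + f i (clampIdx N (j-1)) k
              - 2*f i j k) * g i j k)) := by
    rw [← S3_mul, ← S3_mul, ← S3_mul, ← S3_add, ← S3_add]
    apply S3_congr
    intro i hi j hj k hk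
    obtain ⟨hi1, hi2⟩ := mem_cell.mp hi
    obtain ⟨hj1, hj2⟩ := mem_cell.mp hj
    unfold lapFZ fExtZ
    rw [clamp_id hi1 hi2, clamp_id hj1 hj2]
    field_simp
    ring
  have t1 : S3 (cellIdx N) (cellIdx N) (faceIdx N)
        (fun i j k => (f i j (k+1) + f i j (k-1) - 2*f i j k) * g i j k)
      = -∑ i ∈ cellIdx N, ∑ j ∈ cellIdx N, ∑ k ∈ Finset.Icc (0:ℤ) ((N:ℤ)-1),
          (f i j (k+1) - f i j k) * (g i j (k+1) - g i j k) := by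
    rw [S3, ← Finset.sum_neg_distrib]
    refine Finset.sum_congr rfl fun i hi => ?_
    rw [← Finset.sum_neg_distrib]
    refine Finset.sum_congr rfl fun j hj => ?_
    exact dir1 N (fun k => f i j k) (fun k => g i j k) (hg i hi j hj).1 (hg i hi j hj).2
  have t2 : S3 (cellIdx N) (cellIdx N) (faceIdx N)
        (fun i j k => (f (clampIdx N (i+1)) j k + f (clampIdx N (i-1)) j k
            - 2*f i j k) * g i j k)
      = -∑ j ∈ cellIdx N, ∑ k ∈ faceIdx N, ∑ i ∈ faceIdx N,
          (g (i+1) j k - g i j k) * (f (i+1) j k - f i j k) := by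
    rw [S3_rot, ← Finset.sum_neg_distrib]
    refine Finset.sum_congr rfl fun j hj => ?_
    rw [← Finset.sum_neg_distrib]
    refine Finset.sum_congr rfl fun k hk => ?_
    have base := neu1 N (fun t => f (clampIdx N t) j k) (fun t => g t j k)
      (by simp [clamp_zero, clamp_one]) (by simp [clamp_top hN, clamp_N hN])
    calc ∑ i ∈ cellIdx N, (f (clampIdx N (i+1)) j k + f (clampIdx N (i-1)) j k
            - 2*f i j k) * g i j k
        = ∑ i ∈ cellIdx N, (f (clampIdx N (i+1)) j k + f (clampIdx N (i-1)) j k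
            - 2*f (clampIdx N i) j k) * g i j k := by
          refine Finset.sum_congr rfl fun i hi => ?_
          obtain ⟨hi1, hi2⟩ := mem_cell.mp hi
          rw [clamp_id hi1 hi2]
      _ = -∑ i ∈ Finset.Icc (1:ℤ) ((N:ℤ)-1), (g (i+1) j k - g i j k)
            * (f (clampIdx N (i+1)) j k - f (clampIdx N i) j k) := base
      _ = -∑ i ∈ faceIdx N, (g (i+1) j k - g i j k) * (f (i+1) j k - f i j k) := by
          congr 1
          refine Finset.sum_congr rfl fun i hi => ?_
          obtain ⟨hi1, hi2⟩ := mem_face.mp hi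
          rw [clamp_id hi1 (by omega), clamp_id (by omega : (1:ℤ) ≤ i+1) (by omega)]
  have t3 : S3 (cellIdx N) (cellIdx N) (faceIdx N)
        (fun i j k => (f i (clampIdx N (j+1)) k + f i (clampIdx N (j-1)) k
            - 2*f i j k) * g i j k)
      = -∑ i ∈ cellIdx N, ∑ k ∈ faceIdx N, ∑ j ∈ faceIdx N,
          (g i (j+1) k - g i j k) * (f i (j+1) k - f i j k) := by
    rw [S3_swap23, ← Finset.sum_neg_distrib]
    refine Finset.sum_congr rfl fun i hi => ?_
    rw [← Finset.sum_neg_distrib]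
    refine Finset.sum_congr rfl fun k hk => ?_
    have base := neu1 N (fun t => f i (clampIdx N t) k) (fun t => g i t k)
      (by simp [clamp_zero, clamp_one]) (by simp [clamp_top hN, clamp_N hN])
    calc ∑ j ∈ cellIdx N, (f i (clampIdx N (j+1)) k + f i (clampIdx N (j-1)) k
            - 2*f i j k) * g i j k
        = ∑ j ∈ cellIdx N, (f i (clampIdx N (j+1)) k + f i (clampIdx N (j-1)) k
            - 2*f i (clampIdx N j) k) * g i j k := by
          refine Finset.sum_congr rfl fun j hj => ?_
          obtain ⟨hj1, hj2⟩ := mem_cell.mp hj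
          rw [clamp_id hj1 hj2]
      _ = -∑ j ∈ Finset.Icc (1:ℤ) ((N:ℤ)-1), (g i (j+1) k - g i j k)
            * (f i (clampIdx N (j+1)) k - f i (clampIdx N j) k) := base
      _ = -∑ j ∈ faceIdx N, (g i (j+1) k - g i j k) * (f i (j+1) k - f i j k) := by
          congr 1
          refine Finset.sum_congr rfl fun j hj => ?_
          obtain ⟨hj1, hj2⟩ := mem_face.mp hj
          rw [clamp_id hj1 (by omega), clamp_id (by omega : (1:ℤ) ≤ j+1) (by omega)]
  rw [split, t1, t2, t3]
  ring


lemma sum3_comm (A B C : Finset ℤ) (F G : ℤ → ℤ → ℤ → ℝ) :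
    (∑ i ∈ A, ∑ j ∈ B, ∑ k ∈ C, F i j k * G i j k)
      = ∑ i ∈ A, ∑ j ∈ B, ∑ k ∈ C, G i j k * F i j k :=
  Finset.sum_congr rfl fun i _ => Finset.sum_congr rfl fun j _ =>
    Finset.sum_congr rfl fun k _ => mul_comm _ _

lemma S3_neg {A B C : Finset ℤ} {F : ℤ → ℤ → ℤ → ℝ} :
    S3 A B C (fun i j k => -F i j k) = -S3 A B C F := by
  simp [S3]

/-! ### The core identity -/

set_option maxHeartbeats 2000000 in
lemma core (N : ℕ) (hN : 0 < N) (h : ℝ) (hh : h ≠ 0) (γ s : ℝ) (hγ : γ ≠ 0)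
    (φn μa μb pa pb uax uay uaz ubx uby ubz : ℤ → ℤ → ℤ → ℝ)
    (ha : StokesForMu N h γ φn μa pa uax uay uaz)
    (hb : StokesForMu N h γ φn μb pb ubx uby ubz) :
    cip N h μa (Lh N h s φn μb ubx uby ubz)
      = s * h^3 * (S3 (faceIdx N) (cellIdx N) (cellIdx N)
            (fun i j k => Dx N h μa i j k * Dx N h μb i j k)
          + S3 (cellIdx N) (faceIdx N) (cellIdx N)
            (fun i j k => Dy N h μa i j k * Dy N h μb i j k)
          + S3 (cellIdx N) (cellIdx N) (faceIdx N)
            (fun i j k => Dz N h μa i j k * Dz N h μb i j k))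
        + (s/γ) * h^3 * ((S3 (faceIdx N) (cellIdx N) (cellIdx N)
              (fun i j k => uax i j k * ubx i j k)
            + S3 (cellIdx N) (faceIdx N) (cellIdx N)
              (fun i j k => uay i j k * uby i j k)
            + S3 (cellIdx N) (cellIdx N) (faceIdx N)
              (fun i j k => uaz i j k * ubz i j k))
          + (S3 (faceIdx N) (cellIdx N) (cellIdx N)
              (fun i j k => (-lapFX N h uax i j k) * ubx i j k)
            + S3 (cellIdx N) (faceIdx N) (cellIdx N)
              (fun i j k => (-lapFY N h uay i j k) * uby i j k)
            + S3 (cellIdx N) (cellIdx N) (faceIdx N)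
              (fun i j k => (-lapFZ N h uaz i j k) * ubz i j k))) := by
  obtain ⟨hnpa, hmax, hmay, hmaz, hdiva⟩ := ha
  obtain ⟨hnpb, hmbx, hmby, hmbz, hdivb⟩ := hb
  obtain ⟨hnpbx, hnpby, hnpbz⟩ := hnpb
  have hA : cip N h μa (Lh N h s φn μb ubx uby ubz)
      = h^3 * S3 (cellIdx N) (cellIdx N) (cellIdx N)
          (fun i j k => μa i j k * Lh N h s φn μb ubx uby ubz i j k) := rfl
  -- split the operator into its six directional pieces
  have hB : S3 (cellIdx N) (cellIdx N) (cellIdx N)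
        (fun i j k => μa i j k * Lh N h s φn μb ubx uby ubz i j k)
      = (s/h) * S3 (cellIdx N) (cellIdx N) (cellIdx N)
          (fun i j k => μa i j k
            * (AxF N φn i j k * ubx i j k - AxF N φn (i-1) j k * ubx (i-1) j k))
        + (s/h) * S3 (cellIdx N) (cellIdx N) (cellIdx N)
          (fun i j k => μa i j k
            * (AyF N φn i j k * uby i j k - AyF N φn i (j-1) k * uby i (j-1) k))
        + (s/h) * S3 (cellIdx N) (cellIdx N) (cellIdx N)
          (fun i j k => μa i j k
            * (AzF N φn i j k * ubz i j k - AzF N φn i j (k-1) * ubz i j (k-1)))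
        - (s/h^2) * S3 (cellIdx N) (cellIdx N) (cellIdx N)
          (fun i j k => μa i j k * ((nExt N μb (i+1) j k - nExt N μb i j k)
            - (nExt N μb i j k - nExt N μb (i-1) j k)))
        - (s/h^2) * S3 (cellIdx N) (cellIdx N) (cellIdx N)
          (fun i j k => μa i j k * ((nExt N μb i (j+1) k - nExt N μb i j k)
            - (nExt N μb i j k - nExt N μb i (j-1) k)))
        - (s/h^2) * S3 (cellIdx N) (cellIdx N) (cellIdx N)
          (fun i j k => μa i j k * ((nExt N μb i j (k+1) - nExt N μb i j k)
            - (nExt N μb i j k - nExt N μb i j (k-1)))) := by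
    rw [← S3_mul, ← S3_mul, ← S3_mul, ← S3_mul, ← S3_mul, ← S3_mul,
      ← S3_add, ← S3_add, ← S3_sub, ← S3_sub, ← S3_sub]
    apply S3_congr
    intro i _ j _ k _
    simp only [Lh, divH, lapC]
    field_simp
    ring
  -- divergence parts, summation by parts
  have dvx : S3 (cellIdx N) (cellIdx N) (cellIdx N)
        (fun i j k => μa i j k
          * (AxF N φn i j k * ubx i j k - AxF N φn (i-1) j k * ubx (i-1) j k))
      = -S3 (faceIdx N) (cellIdx N) (cellIdx N)
          (fun i j k => (μa (i+1) j k - μa i j k) * (AxF N φn i j k * ubx i j k)) := by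
    simpa using divx3 N μa (fun a b c => AxF N φn a b c * ubx a b c)
      (fun j hj k hk => ⟨(by rw [(hnpbx j hj k hk).1, mul_zero] :
          AxF N φn 0 j k * ubx 0 j k = 0),
        (by rw [(hnpbx j hj k hk).2, mul_zero] :
          AxF N φn (N:ℤ) j k * ubx (N:ℤ) j k = 0)⟩)
  have dvy : S3 (cellIdx N) (cellIdx N) (cellIdx N)
        (fun i j k => μa i j k
          * (AyF N φn i j k * uby i j k - AyF N φn i (j-1) k * uby i (j-1) k))
      = -S3 (cellIdx N) (faceIdx N) (cellIdx N)
          (fun i j k => (μa i (j+1) k - μa i j k) * (AyF N φn i j k * uby i j k)) := by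
    simpa using divy3 N μa (fun a b c => AyF N φn a b c * uby a b c)
      (fun i hi k hk => ⟨(by rw [(hnpby i hi k hk).1, mul_zero] :
          AyF N φn i 0 k * uby i 0 k = 0),
        (by rw [(hnpby i hi k hk).2, mul_zero] :
          AyF N φn i (N:ℤ) k * uby i (N:ℤ) k = 0)⟩)
  have dvz : S3 (cellIdx N) (cellIdx N) (cellIdx N)
        (fun i j k => μa i j k
          * (AzF N φn i j k * ubz i j k - AzF N φn i j (k-1) * ubz i j (k-1)))
      = -S3 (cellIdx N) (cellIdx N) (faceIdx N)
          (fun i j k => (μa i j (k+1) - μa i j k) * (AzF N φn i j k * ubz i j k)) := by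
    simpa using divz3 N μa (fun a b c => AzF N φn a b c * ubz a b c)
      (fun i hi j hj => ⟨(by rw [(hnpbz i hi j hj).1, mul_zero] :
          AzF N φn i j 0 * ubz i j 0 = 0),
        (by rw [(hnpbz i hi j hj).2, mul_zero] :
          AzF N φn i j (N:ℤ) * ubz i j (N:ℤ) = 0)⟩)
  -- Laplacian parts, summation by parts
  have bcx : ∀ j ∈ cellIdx N, ∀ k ∈ cellIdx N,
      (nExt N μb (0+1) j k - nExt N μb 0 j k = 0)
        ∧ (nExt N μb ((N:ℤ)+1) j k - nExt N μb (N:ℤ) j k = 0) := by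
    intro j _ k _
    constructor
    · unfold nExt; norm_num [clamp_zero, clamp_one]
    · unfold nExt; rw [clamp_top hN, clamp_N hN]; ring
  have bcy : ∀ i ∈ cellIdx N, ∀ k ∈ cellIdx N,
      (nExt N μb i (0+1) k - nExt N μb i 0 k = 0)
        ∧ (nExt N μb i ((N:ℤ)+1) k - nExt N μb i (N:ℤ) k = 0) := by
    intro i _ k _
    constructor
    · unfold nExt; norm_num [clamp_zero, clamp_one]
    · unfold nExt; rw [clamp_top hN, clamp_N hN]; ring
  have bcz : ∀ i ∈ cellIdx N, ∀ j ∈ cellIdx N,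
      (nExt N μb i j (0+1) - nExt N μb i j 0 = 0)
        ∧ (nExt N μb i j ((N:ℤ)+1) - nExt N μb i j (N:ℤ) = 0) := by
    intro i _ j _
    constructor
    · unfold nExt; norm_num [clamp_zero, clamp_one]
    · unfold nExt; rw [clamp_top hN, clamp_N hN]; ring
  have lx : S3 (cellIdx N) (cellIdx N) (cellIdx N)
        (fun i j k => μa i j k * ((nExt N μb (i+1) j k - nExt N μb i j k)
          - (nExt N μb i j k - nExt N μb (i-1) j k)))
      = -S3 (faceIdx N) (cellIdx N) (cellIdx N)
          (fun i j k => (μa (i+1) j k - μa i j k)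
            * (nExt N μb (i+1) j k - nExt N μb i j k)) := by
    have := divx3 N μa (fun a b c => nExt N μb (a+1) b c - nExt N μb a b c)
      (fun j hj k hk => ⟨(bcx j hj k hk).1, (bcx j hj k hk).2⟩)
    simpa using this
  have ly : S3 (cellIdx N) (cellIdx N) (cellIdx N)
        (fun i j k => μa i j k * ((nExt N μb i (j+1) k - nExt N μb i j k)
          - (nExt N μb i j k - nExt N μb i (j-1) k)))
      = -S3 (cellIdx N) (faceIdx N) (cellIdx N)
          (fun i j k => (μa i (j+1) k - μa i j k)
            * (nExt N μb i (j+1) k - nExt N μb i j k)) := by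
    have := divy3 N μa (fun a b c => nExt N μb a (b+1) c - nExt N μb a b c)
      (fun i hi k hk => ⟨(bcy i hi k hk).1, (bcy i hi k hk).2⟩)
    simpa using this
  have lz : S3 (cellIdx N) (cellIdx N) (cellIdx N)
        (fun i j k => μa i j k * ((nExt N μb i j (k+1) - nExt N μb i j k)
          - (nExt N μb i j k - nExt N μb i j (k-1))))
      = -S3 (cellIdx N) (cellIdx N) (faceIdx N)
          (fun i j k => (μa i j (k+1) - μa i j k)
            * (nExt N μb i j (k+1) - nExt N μb i j k)) := by
    have := divz3 N μa (fun a b c => nExt N μb a b (c+1) - nExt N μb a b c)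
      (fun i hi j hj => ⟨(bcz i hi j hj).1, (bcz i hi j hj).2⟩)
    simpa using this
  -- gradient form
  have gx : S3 (faceIdx N) (cellIdx N) (cellIdx N)
        (fun i j k => (μa (i+1) j k - μa i j k) * (nExt N μb (i+1) j k - nExt N μb i j k))
      = h^2 * S3 (faceIdx N) (cellIdx N) (cellIdx N)
          (fun i j k => Dx N h μa i j k * Dx N h μb i j k) := by
    rw [← S3_mul]
    apply S3_congr
    intro i hi j hj k hk
    rw [Dx_int h μa hi hj hk,
      show Dx N h μb i j k = (nExt N μb (i+1) j k - nExt N μb i j k) / h from rfl]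
    field_simp
  have gy : S3 (cellIdx N) (faceIdx N) (cellIdx N)
        (fun i j k => (μa i (j+1) k - μa i j k) * (nExt N μb i (j+1) k - nExt N μb i j k))
      = h^2 * S3 (cellIdx N) (faceIdx N) (cellIdx N)
          (fun i j k => Dy N h μa i j k * Dy N h μb i j k) := by
    rw [← S3_mul]
    apply S3_congr
    intro i hi j hj k hk
    rw [Dy_int h μa hi hj hk,
      show Dy N h μb i j k = (nExt N μb i (j+1) k - nExt N μb i j k) / h from rfl]
    field_simp
  have gz : S3 (cellIdx N) (cellIdx N) (faceIdx N)
        (fun i j k => (μa i j (k+1) - μa i j k) * (nExt N μb i j (k+1) - nExt N μb i j k))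
      = h^2 * S3 (cellIdx N) (cellIdx N) (faceIdx N)
          (fun i j k => Dz N h μa i j k * Dz N h μb i j k) := by
    rw [← S3_mul]
    apply S3_congr
    intro i hi j hj k hk
    rw [Dz_int h μa hi hj hk,
      show Dz N h μb i j k = (nExt N μb i j (k+1) - nExt N μb i j k) / h from rfl]
    field_simp
  -- momentum substitution
  have mx : S3 (faceIdx N) (cellIdx N) (cellIdx N)
        (fun i j k => (μa (i+1) j k - μa i j k) * (AxF N φn i j k * ubx i j k))
      = (h/γ) * S3 (faceIdx N) (cellIdx N) (cellIdx N)
          (fun i j k => (lapFX N h uax i j k - uax i j k - Dx N h pa i j k) * ubx i j k) := by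
    rw [← S3_mul]
    apply S3_congr
    intro i hi j hj k hk
    have hm := hmax i hi j hj k hk
    rw [Dx_int h μa hi hj hk] at hm
    have e : lapFX N h uax i j k - uax i j k - Dx N h pa i j k
        = γ * (AxF N φn i j k * ((μa (i+1) j k - μa i j k) / h)) := by linarith
    rw [e]
    field_simp
  have my : S3 (cellIdx N) (faceIdx N) (cellIdx N)
        (fun i j k => (μa i (j+1) k - μa i j k) * (AyF N φn i j k * uby i j k))
      = (h/γ) * S3 (cellIdx N) (faceIdx N) (cellIdx N)
          (fun i j k => (lapFY N h uay i j k - uay i j k - Dy N h pa i j k) * uby i j k) := by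
    rw [← S3_mul]
    apply S3_congr
    intro i hi j hj k hk
    have hm := hmay i hi j hj k hk
    rw [Dy_int h μa hi hj hk] at hm
    have e : lapFY N h uay i j k - uay i j k - Dy N h pa i j k
        = γ * (AyF N φn i j k * ((μa i (j+1) k - μa i j k) / h)) := by linarith
    rw [e]
    field_simp
  have mz : S3 (cellIdx N) (cellIdx N) (faceIdx N)
        (fun i j k => (μa i j (k+1) - μa i j k) * (AzF N φn i j k * ubz i j k))
      = (h/γ) * S3 (cellIdx N) (cellIdx N) (faceIdx N)
          (fun i j k => (lapFZ N h uaz i j k - uaz i j k - Dz N h pa i j k) * ubz i j k) := by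
    rw [← S3_mul]
    apply S3_congr
    intro i hi j hj k hk
    have hm := hmaz i hi j hj k hk
    rw [Dz_int h μa hi hj hk] at hm
    have e : lapFZ N h uaz i j k - uaz i j k - Dz N h pa i j k
        = γ * (AzF N φn i j k * ((μa i j (k+1) - μa i j k) / h)) := by linarith
    rw [e]
    field_simp
  -- splitting of the momentum sums
  have sx : S3 (faceIdx N) (cellIdx N) (cellIdx N)
        (fun i j k => (lapFX N h uax i j k - uax i j k - Dx N h pa i j k) * ubx i j k)
      = -S3 (faceIdx N) (cellIdx N) (cellIdx N)
          (fun i j k => (-lapFX N h uax i j k) * ubx i j k)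
        - S3 (faceIdx N) (cellIdx N) (cellIdx N) (fun i j k => uax i j k * ubx i j k)
        - S3 (faceIdx N) (cellIdx N) (cellIdx N)
          (fun i j k => Dx N h pa i j k * ubx i j k) := by
    rw [← S3_neg, ← S3_sub, ← S3_sub]
    apply S3_congr
    intro i _ j _ k _
    ring
  have sy : S3 (cellIdx N) (faceIdx N) (cellIdx N)
        (fun i j k => (lapFY N h uay i j k - uay i j k - Dy N h pa i j k) * uby i j k)
      = -S3 (cellIdx N) (faceIdx N) (cellIdx N)
          (fun i j k => (-lapFY N h uay i j k) * uby i j k)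
        - S3 (cellIdx N) (faceIdx N) (cellIdx N) (fun i j k => uay i j k * uby i j k)
        - S3 (cellIdx N) (faceIdx N) (cellIdx N)
          (fun i j k => Dy N h pa i j k * uby i j k) := by
    rw [← S3_neg, ← S3_sub, ← S3_sub]
    apply S3_congr
    intro i _ j _ k _
    ring
  have sz : S3 (cellIdx N) (cellIdx N) (faceIdx N)
        (fun i j k => (lapFZ N h uaz i j k - uaz i j k - Dz N h pa i j k) * ubz i j k)
      = -S3 (cellIdx N) (cellIdx N) (faceIdx N)
          (fun i j k => (-lapFZ N h uaz i j k) * ubz i j k)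
        - S3 (cellIdx N) (cellIdx N) (faceIdx N) (fun i j k => uaz i j k * ubz i j k)
        - S3 (cellIdx N) (cellIdx N) (faceIdx N)
          (fun i j k => Dz N h pa i j k * ubz i j k) := by
    rw [← S3_neg, ← S3_sub, ← S3_sub]
    apply S3_congr
    intro i _ j _ k _
    ring
  -- the pressure contribution vanishes
  have px1 : S3 (faceIdx N) (cellIdx N) (cellIdx N)
        (fun i j k => Dx N h pa i j k * ubx i j k)
      = (1/h) * S3 (faceIdx N) (cellIdx N) (cellIdx N)
          (fun i j k => (nExt N pa (i+1) j k - nExt N pa i j k) * ubx i j k) := by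
    rw [← S3_mul]
    apply S3_congr
    intro i _ j _ k _
    show (nExt N pa (i+1) j k - nExt N pa i j k) / h * ubx i j k = _
    ring
  have py1 : S3 (cellIdx N) (faceIdx N) (cellIdx N)
        (fun i j k => Dy N h pa i j k * uby i j k)
      = (1/h) * S3 (cellIdx N) (faceIdx N) (cellIdx N)
          (fun i j k => (nExt N pa i (j+1) k - nExt N pa i j k) * uby i j k) := by
    rw [← S3_mul]
    apply S3_congr
    intro i _ j _ k _
    show (nExt N pa i (j+1) k - nExt N pa i j k) / h * uby i j k = _
    ring
  have pz1 : S3 (cellIdx N) (cellIdx N) (faceIdx N)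
        (fun i j k => Dz N h pa i j k * ubz i j k)
      = (1/h) * S3 (cellIdx N) (cellIdx N) (faceIdx N)
          (fun i j k => (nExt N pa i j (k+1) - nExt N pa i j k) * ubz i j k) := by
    rw [← S3_mul]
    apply S3_congr
    intro i _ j _ k _
    show (nExt N pa i j (k+1) - nExt N pa i j k) / h * ubz i j k = _
    ring
  have px2 : S3 (faceIdx N) (cellIdx N) (cellIdx N)
        (fun i j k => (nExt N pa (i+1) j k - nExt N pa i j k) * ubx i j k)
      = -S3 (cellIdx N) (cellIdx N) (cellIdx N)
          (fun i j k => nExt N pa i j k * (ubx i j k - ubx (i-1) j k)) := by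
    have h2 : S3 (cellIdx N) (cellIdx N) (cellIdx N)
        (fun i j k => nExt N pa i j k * (ubx i j k - ubx (i-1) j k))
        = -S3 (faceIdx N) (cellIdx N) (cellIdx N)
          (fun i j k => (nExt N pa (i+1) j k - nExt N pa i j k) * ubx i j k) := by
      simpa using divx3 N (fun a b c => nExt N pa a b c) ubx
        (fun j hj k hk => ⟨(hnpbx j hj k hk).1, (hnpbx j hj k hk).2⟩)
    linarith [h2]
  have py2 : S3 (cellIdx N) (faceIdx N) (cellIdx N)
        (fun i j k => (nExt N pa i (j+1) k - nExt N pa i j k) * uby i j k)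
      = -S3 (cellIdx N) (cellIdx N) (cellIdx N)
          (fun i j k => nExt N pa i j k * (uby i j k - uby i (j-1) k)) := by
    have h2 : S3 (cellIdx N) (cellIdx N) (cellIdx N)
        (fun i j k => nExt N pa i j k * (uby i j k - uby i (j-1) k))
        = -S3 (cellIdx N) (faceIdx N) (cellIdx N)
          (fun i j k => (nExt N pa i (j+1) k - nExt N pa i j k) * uby i j k) := by
      simpa using divy3 N (fun a b c => nExt N pa a b c) uby
        (fun i hi k hk => ⟨(hnpby i hi k hk).1, (hnpby i hi k hk).2⟩)
    linarith [h2]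
  have pz2 : S3 (cellIdx N) (cellIdx N) (faceIdx N)
        (fun i j k => (nExt N pa i j (k+1) - nExt N pa i j k) * ubz i j k)
      = -S3 (cellIdx N) (cellIdx N) (cellIdx N)
          (fun i j k => nExt N pa i j k * (ubz i j k - ubz i j (k-1))) := by
    have h2 : S3 (cellIdx N) (cellIdx N) (cellIdx N)
        (fun i j k => nExt N pa i j k * (ubz i j k - ubz i j (k-1)))
        = -S3 (cellIdx N) (cellIdx N) (faceIdx N)
          (fun i j k => (nExt N pa i j (k+1) - nExt N pa i j k) * ubz i j k) := by
      simpa using divz3 N (fun a b c => nExt N pa a b c) ubz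
        (fun i hi j hj => ⟨(hnpbz i hi j hj).1, (hnpbz i hi j hj).2⟩)
    linarith [h2]
  have press : S3 (cellIdx N) (cellIdx N) (cellIdx N)
        (fun i j k => nExt N pa i j k * (ubx i j k - ubx (i-1) j k))
      + S3 (cellIdx N) (cellIdx N) (cellIdx N)
        (fun i j k => nExt N pa i j k * (uby i j k - uby i (j-1) k))
      + S3 (cellIdx N) (cellIdx N) (cellIdx N)
        (fun i j k => nExt N pa i j k * (ubz i j k - ubz i j (k-1))) = 0 := by
    rw [← S3_add, ← S3_add]
    have z : ∀ i ∈ cellIdx N, ∀ j ∈ cellIdx N, ∀ k ∈ cellIdx N,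
        nExt N pa i j k * (ubx i j k - ubx (i-1) j k)
          + nExt N pa i j k * (uby i j k - uby i (j-1) k)
          + nExt N pa i j k * (ubz i j k - ubz i j (k-1)) = (0:ℝ) := by
      intro i hi j hj k hk
      have hd := hdivb i hi j hj k hk
      unfold divH at hd
      have hd' : ubx i j k - ubx (i-1) j k + (uby i j k - uby i (j-1) k)
          + (ubz i j k - ubz i j (k-1)) = 0 := by
        field_simp at hd
        linarith
      linear_combination nExt N pa i j k * hd'
    rw [S3_congr z]
    simp [S3]
  have pall : S3 (faceIdx N) (cellIdx N) (cellIdx N)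
        (fun i j k => Dx N h pa i j k * ubx i j k)
      + S3 (cellIdx N) (faceIdx N) (cellIdx N)
        (fun i j k => Dy N h pa i j k * uby i j k)
      + S3 (cellIdx N) (cellIdx N) (faceIdx N)
        (fun i j k => Dz N h pa i j k * ubz i j k) = 0 := by
    rw [px1, py1, pz1, px2, py2, pz2]
    linear_combination (-(1/h)) * press
  rw [hA, hB, dvx, dvy, dvz, lx, ly, lz, gx, gy, gz, mx, my, mz, sx, sy, sz]
  linear_combination (norm := (field_simp; ring)) (s * h^3 / γ) * pall

set_option maxHeartbeats 4000000 in
/-- structure of the operator `L_h`: with `u_l` the Stokes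
velocity driven by `μ_l` (`l = 1,2`),
`(μ₁, L_h μ₂) = s (∇_h μ₁, ∇_h μ₂) + (s/γ)[(u₁,u₂) + (-Δ_h u₁, u₂)]`;
in particular `(μ₁, L_h μ₂) = (L_h μ₁, μ₂)`, and
`(μ, L_h μ) ≥ s ‖∇_h μ‖₂²`. -/
theorem Lh_symmetric_positive (L : ℝ) (hL : 0 < L) (N : ℕ) (hN : 0 < N)
    (γ s : ℝ) (hγ : 0 < γ) (hs : 0 < s)
    (φn μ1 μ2 p1 p2 u1x u1y u1z u2x u2y u2z : ℤ → ℤ → ℤ → ℝ)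
    (hμ1 : zeroMean N μ1) (hμ2 : zeroMean N μ2)
    (h1 : StokesForMu N (L / N) γ φn μ1 p1 u1x u1y u1z)
    (h2 : StokesForMu N (L / N) γ φn μ2 p2 u2x u2y u2z) :
    cip N (L / N) μ1 (Lh N (L / N) s φn μ2 u2x u2y u2z) =
        s * macIP N (L / N) (Dx N (L / N) μ1) (Dy N (L / N) μ1) (Dz N (L / N) μ1)
            (Dx N (L / N) μ2) (Dy N (L / N) μ2) (Dz N (L / N) μ2) +
          s / γ * (macIP N (L / N) u1x u1y u1z u2x u2y u2z +
            macIP N (L / N) (fun a b c => -lapFX N (L / N) u1x a b c)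
              (fun a b c => -lapFY N (L / N) u1y a b c)
              (fun a b c => -lapFZ N (L / N) u1z a b c) u2x u2y u2z) ∧
      cip N (L / N) μ1 (Lh N (L / N) s φn μ2 u2x u2y u2z) =
        cip N (L / N) (Lh N (L / N) s φn μ1 u1x u1y u1z) μ2 ∧
      s * gradSq N (L / N) μ1 ≤
        cip N (L / N) μ1 (Lh N (L / N) s φn μ1 u1x u1y u1z) := by
  set h : ℝ := L / (N : ℝ) with hdef
  have hpos : 0 < h := by rw [hdef]; positivity
  have hh : h ≠ 0 := ne_of_gt hpos
  have hγ' : γ ≠ 0 := ne_of_gt hγ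
  obtain ⟨np1x, np1y, np1z⟩ := h1.1
  obtain ⟨np2x, np2y, np2z⟩ := h2.1
  have c1 := core N hN h hh γ s hγ' φn μ1 μ2 p1 p2 u1x u1y u1z u2x u2y u2z h1 h2
  have c2 := core N hN h hh γ s hγ' φn μ2 μ1 p2 p1 u2x u2y u2z u1x u1y u1z h2 h1
  have c11 := core N hN h hh γ s hγ' φn μ1 μ1 p1 p1 u1x u1y u1z u1x u1y u1z h1 h1
  -- boundary-product facts
  have bcg : ∀ (μ ν : ℤ → ℤ → ℤ → ℝ),
      (∀ j ∈ cellIdx N, ∀ k ∈ cellIdx N,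
        Dx N h μ 0 j k * Dx N h ν 0 j k = 0 ∧ Dx N h μ (N:ℤ) j k * Dx N h ν (N:ℤ) j k = 0) :=
    fun μ ν j _ k _ => ⟨by rw [Dx_bdry0, zero_mul], by rw [Dx_bdryN hN, zero_mul]⟩
  have bcgy : ∀ (μ ν : ℤ → ℤ → ℤ → ℝ),
      (∀ i ∈ cellIdx N, ∀ k ∈ cellIdx N,
        Dy N h μ i 0 k * Dy N h ν i 0 k = 0 ∧ Dy N h μ i (N:ℤ) k * Dy N h ν i (N:ℤ) k = 0) :=
    fun μ ν i _ k _ => ⟨by rw [Dy_bdry0, zero_mul], by rw [Dy_bdryN hN, zero_mul]⟩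
  have bcgz : ∀ (μ ν : ℤ → ℤ → ℤ → ℝ),
      (∀ i ∈ cellIdx N, ∀ j ∈ cellIdx N,
        Dz N h μ i j 0 * Dz N h ν i j 0 = 0 ∧ Dz N h μ i j (N:ℤ) * Dz N h ν i j (N:ℤ) = 0) :=
    fun μ ν i _ j _ => ⟨by rw [Dz_bdry0, zero_mul], by rw [Dz_bdryN hN, zero_mul]⟩
  -- conversion of the three MAC inner products appearing in the statement
  have mg : macIP N h (Dx N h μ1) (Dy N h μ1) (Dz N h μ1)
        (Dx N h μ2) (Dy N h μ2) (Dz N h μ2)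
      = h^3 * S3 (faceIdx N) (cellIdx N) (cellIdx N)
          (fun i j k => Dx N h μ1 i j k * Dx N h μ2 i j k)
        + h^3 * S3 (cellIdx N) (faceIdx N) (cellIdx N)
          (fun i j k => Dy N h μ1 i j k * Dy N h μ2 i j k)
        + h^3 * S3 (cellIdx N) (cellIdx N) (faceIdx N)
          (fun i j k => Dz N h μ1 i j k * Dz N h μ2 i j k) := by
    unfold macIP
    rw [ipFX_collapse N h _ _ (bcg μ1 μ2), ipFY_collapse N h _ _ (bcgy μ1 μ2),
      ipFZ_collapse N h _ _ (bcgz μ1 μ2)]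
  have mu : macIP N h u1x u1y u1z u2x u2y u2z
      = h^3 * S3 (faceIdx N) (cellIdx N) (cellIdx N) (fun i j k => u1x i j k * u2x i j k)
        + h^3 * S3 (cellIdx N) (faceIdx N) (cellIdx N) (fun i j k => u1y i j k * u2y i j k)
        + h^3 * S3 (cellIdx N) (cellIdx N) (faceIdx N) (fun i j k => u1z i j k * u2z i j k) := by
    unfold macIP
    rw [ipFX_collapse N h _ _ (fun j hj k hk =>
        ⟨by rw [(np1x j hj k hk).1, zero_mul], by rw [(np1x j hj k hk).2, zero_mul]⟩),
      ipFY_collapse N h _ _ (fun i hi k hk =>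
        ⟨by rw [(np1y i hi k hk).1, zero_mul], by rw [(np1y i hi k hk).2, zero_mul]⟩),
      ipFZ_collapse N h _ _ (fun i hi j hj =>
        ⟨by rw [(np1z i hi j hj).1, zero_mul], by rw [(np1z i hi j hj).2, zero_mul]⟩)]
  have ml : macIP N h (fun a b c => -lapFX N h u1x a b c) (fun a b c => -lapFY N h u1y a b c)
        (fun a b c => -lapFZ N h u1z a b c) u2x u2y u2z
      = h^3 * S3 (faceIdx N) (cellIdx N) (cellIdx N)
          (fun i j k => (-lapFX N h u1x i j k) * u2x i j k)
        + h^3 * S3 (cellIdx N) (faceIdx N) (cellIdx N)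
          (fun i j k => (-lapFY N h u1y i j k) * u2y i j k)
        + h^3 * S3 (cellIdx N) (cellIdx N) (faceIdx N)
          (fun i j k => (-lapFZ N h u1z i j k) * u2z i j k) := by
    unfold macIP
    rw [ipFX_collapse N h _ _ (fun j hj k hk =>
        ⟨by rw [(np2x j hj k hk).1, mul_zero], by rw [(np2x j hj k hk).2, mul_zero]⟩),
      ipFY_collapse N h _ _ (fun i hi k hk =>
        ⟨by rw [(np2y i hi k hk).1, mul_zero], by rw [(np2y i hi k hk).2, mul_zero]⟩),
      ipFZ_collapse N h _ _ (fun i hi j hj =>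
        ⟨by rw [(np2z i hi j hj).1, mul_zero], by rw [(np2z i hi j hj).2, mul_zero]⟩)]
  -- part 1
  have part1 : cip N h μ1 (Lh N h s φn μ2 u2x u2y u2z) =
      s * macIP N h (Dx N h μ1) (Dy N h μ1) (Dz N h μ1)
          (Dx N h μ2) (Dy N h μ2) (Dz N h μ2) +
        s / γ * (macIP N h u1x u1y u1z u2x u2y u2z +
          macIP N h (fun a b c => -lapFX N h u1x a b c)
            (fun a b c => -lapFY N h u1y a b c)
            (fun a b c => -lapFZ N h u1z a b c) u2x u2y u2z) := by
    rw [c1, mg, mu, ml]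
    ring
  refine ⟨part1, ?_, ?_⟩
  · -- symmetry
    have comm : cip N h (Lh N h s φn μ1 u1x u1y u1z) μ2
        = cip N h μ2 (Lh N h s φn μ1 u1x u1y u1z) := by
      unfold cip
      congr 1
      exact Finset.sum_congr rfl fun i _ => Finset.sum_congr rfl fun j _ =>
        Finset.sum_congr rfl fun k _ => mul_comm _ _
    rw [comm, c1, c2]
    -- symmetric pieces
    have sgx : S3 (faceIdx N) (cellIdx N) (cellIdx N)
          (fun i j k => Dx N h μ2 i j k * Dx N h μ1 i j k)
        = S3 (faceIdx N) (cellIdx N) (cellIdx N)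
          (fun i j k => Dx N h μ1 i j k * Dx N h μ2 i j k) :=
      S3_congr fun i _ j _ k _ => mul_comm _ _
    have sgy : S3 (cellIdx N) (faceIdx N) (cellIdx N)
          (fun i j k => Dy N h μ2 i j k * Dy N h μ1 i j k)
        = S3 (cellIdx N) (faceIdx N) (cellIdx N)
          (fun i j k => Dy N h μ1 i j k * Dy N h μ2 i j k) :=
      S3_congr fun i _ j _ k _ => mul_comm _ _
    have sgz : S3 (cellIdx N) (cellIdx N) (faceIdx N)
          (fun i j k => Dz N h μ2 i j k * Dz N h μ1 i j k)
        = S3 (cellIdx N) (cellIdx N) (faceIdx N)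
          (fun i j k => Dz N h μ1 i j k * Dz N h μ2 i j k) :=
      S3_congr fun i _ j _ k _ => mul_comm _ _
    have sux : S3 (faceIdx N) (cellIdx N) (cellIdx N)
          (fun i j k => u2x i j k * u1x i j k)
        = S3 (faceIdx N) (cellIdx N) (cellIdx N) (fun i j k => u1x i j k * u2x i j k) :=
      S3_congr fun i _ j _ k _ => mul_comm _ _
    have suy : S3 (cellIdx N) (faceIdx N) (cellIdx N)
          (fun i j k => u2y i j k * u1y i j k)
        = S3 (cellIdx N) (faceIdx N) (cellIdx N) (fun i j k => u1y i j k * u2y i j k) :=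
      S3_congr fun i _ j _ k _ => mul_comm _ _
    have suz : S3 (cellIdx N) (cellIdx N) (faceIdx N)
          (fun i j k => u2z i j k * u1z i j k)
        = S3 (cellIdx N) (cellIdx N) (faceIdx N) (fun i j k => u1z i j k * u2z i j k) :=
      S3_congr fun i _ j _ k _ => mul_comm _ _
    have slx : S3 (faceIdx N) (cellIdx N) (cellIdx N)
          (fun i j k => (-lapFX N h u2x i j k) * u1x i j k)
        = S3 (faceIdx N) (cellIdx N) (cellIdx N)
          (fun i j k => (-lapFX N h u1x i j k) * u2x i j k) := by
      rw [lapFX_sum N hN h hh u2x u1x (fun j hj k hk => np1x j hj k hk),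
        lapFX_sum N hN h hh u1x u2x (fun j hj k hk => np2x j hj k hk)]
      congr 1
      refine congrArg₂ (· + ·) (congrArg₂ (· + ·) ?_ ?_) ?_ <;>
        exact sum3_comm _ _ _ _ _
    have sly : S3 (cellIdx N) (faceIdx N) (cellIdx N)
          (fun i j k => (-lapFY N h u2y i j k) * u1y i j k)
        = S3 (cellIdx N) (faceIdx N) (cellIdx N)
          (fun i j k => (-lapFY N h u1y i j k) * u2y i j k) := by
      rw [lapFY_sum N hN h hh u2y u1y (fun i hi k hk => np1y i hi k hk),
        lapFY_sum N hN h hh u1y u2y (fun i hi k hk => np2y i hi k hk)]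
      congr 1
      refine congrArg₂ (· + ·) (congrArg₂ (· + ·) ?_ ?_) ?_ <;>
        exact sum3_comm _ _ _ _ _
    have slz : S3 (cellIdx N) (cellIdx N) (faceIdx N)
          (fun i j k => (-lapFZ N h u2z i j k) * u1z i j k)
        = S3 (cellIdx N) (cellIdx N) (faceIdx N)
          (fun i j k => (-lapFZ N h u1z i j k) * u2z i j k) := by
      rw [lapFZ_sum N hN h hh u2z u1z (fun i hi j hj => np1z i hi j hj),
        lapFZ_sum N hN h hh u1z u2z (fun i hi j hj => np2z i hi j hj)]
      congr 1
      refine congrArg₂ (· + ·) (congrArg₂ (· + ·) ?_ ?_) ?_ <;>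
        exact sum3_comm _ _ _ _ _
    rw [sgx, sgy, sgz, sux, suy, suz, slx, sly, slz]
  · -- positivity
    rw [c11]
    have eg1 : (∑ i ∈ faceIdx N, ∑ j ∈ cellIdx N, ∑ k ∈ cellIdx N, Dx N h μ1 i j k ^ 2)
        = S3 (faceIdx N) (cellIdx N) (cellIdx N)
          (fun i j k => Dx N h μ1 i j k * Dx N h μ1 i j k) :=
      Finset.sum_congr rfl fun i _ => Finset.sum_congr rfl fun j _ =>
        Finset.sum_congr rfl fun k _ => pow_two _
    have eg2 : (∑ i ∈ cellIdx N, ∑ j ∈ faceIdx N, ∑ k ∈ cellIdx N, Dy N h μ1 i j k ^ 2)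
        = S3 (cellIdx N) (faceIdx N) (cellIdx N)
          (fun i j k => Dy N h μ1 i j k * Dy N h μ1 i j k) :=
      Finset.sum_congr rfl fun i _ => Finset.sum_congr rfl fun j _ =>
        Finset.sum_congr rfl fun k _ => pow_two _
    have eg3 : (∑ i ∈ cellIdx N, ∑ j ∈ cellIdx N, ∑ k ∈ faceIdx N, Dz N h μ1 i j k ^ 2)
        = S3 (cellIdx N) (cellIdx N) (faceIdx N)
          (fun i j k => Dz N h μ1 i j k * Dz N h μ1 i j k) :=
      Finset.sum_congr rfl fun i _ => Finset.sum_congr rfl fun j _ =>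
        Finset.sum_congr rfl fun k _ => pow_two _
    have egrad : s * gradSq N h μ1
        = s * h^3 * (S3 (faceIdx N) (cellIdx N) (cellIdx N)
            (fun i j k => Dx N h μ1 i j k * Dx N h μ1 i j k)
          + S3 (cellIdx N) (faceIdx N) (cellIdx N)
            (fun i j k => Dy N h μ1 i j k * Dy N h μ1 i j k)
          + S3 (cellIdx N) (cellIdx N) (faceIdx N)
            (fun i j k => Dz N h μ1 i j k * Dz N h μ1 i j k)) := by
      unfold gradSq
      rw [eg1, eg2, eg3]
      ring
    rw [egrad]
    have upos : 0 ≤ S3 (faceIdx N) (cellIdx N) (cellIdx N)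
          (fun i j k => u1x i j k * u1x i j k)
        + S3 (cellIdx N) (faceIdx N) (cellIdx N) (fun i j k => u1y i j k * u1y i j k)
        + S3 (cellIdx N) (cellIdx N) (faceIdx N) (fun i j k => u1z i j k * u1z i j k) := by
      have t1 : (0:ℝ) ≤ S3 (faceIdx N) (cellIdx N) (cellIdx N)
          (fun i j k => u1x i j k * u1x i j k) :=
        Finset.sum_nonneg fun i _ => Finset.sum_nonneg fun j _ =>
          Finset.sum_nonneg fun k _ => mul_self_nonneg _
      have t2 : (0:ℝ) ≤ S3 (cellIdx N) (faceIdx N) (cellIdx N)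
          (fun i j k => u1y i j k * u1y i j k) :=
        Finset.sum_nonneg fun i _ => Finset.sum_nonneg fun j _ =>
          Finset.sum_nonneg fun k _ => mul_self_nonneg _
      have t3 : (0:ℝ) ≤ S3 (cellIdx N) (cellIdx N) (faceIdx N)
          (fun i j k => u1z i j k * u1z i j k) :=
        Finset.sum_nonneg fun i _ => Finset.sum_nonneg fun j _ =>
          Finset.sum_nonneg fun k _ => mul_self_nonneg _
      linarith
    have lposx : 0 ≤ S3 (faceIdx N) (cellIdx N) (cellIdx N)
        (fun i j k => (-lapFX N h u1x i j k) * u1x i j k) := by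
      rw [lapFX_sum N hN h hh u1x u1x (fun j hj k hk => np1x j hj k hk)]
      refine mul_nonneg (by positivity) (add_nonneg (add_nonneg ?_ ?_) ?_) <;>
        exact Finset.sum_nonneg fun a _ => Finset.sum_nonneg fun b _ =>
          Finset.sum_nonneg fun c _ => mul_self_nonneg _
    have lposy : 0 ≤ S3 (cellIdx N) (faceIdx N) (cellIdx N)
        (fun i j k => (-lapFY N h u1y i j k) * u1y i j k) := by
      rw [lapFY_sum N hN h hh u1y u1y (fun i hi k hk => np1y i hi k hk)]
      refine mul_nonneg (by positivity) (add_nonneg (add_nonneg ?_ ?_) ?_) <;>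
        exact Finset.sum_nonneg fun a _ => Finset.sum_nonneg fun b _ =>
          Finset.sum_nonneg fun c _ => mul_self_nonneg _
    have lposz : 0 ≤ S3 (cellIdx N) (cellIdx N) (faceIdx N)
        (fun i j k => (-lapFZ N h u1z i j k) * u1z i j k) := by
      rw [lapFZ_sum N hN h hh u1z u1z (fun i hi j hj => np1z i hi j hj)]
      refine mul_nonneg (by positivity) (add_nonneg (add_nonneg ?_ ?_) ?_) <;>
        exact Finset.sum_nonneg fun a _ => Finset.sum_nonneg fun b _ =>
          Finset.sum_nonneg fun c _ => mul_self_nonneg _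
    have rest : 0 ≤ (s/γ) * h^3 * ((S3 (faceIdx N) (cellIdx N) (cellIdx N)
          (fun i j k => u1x i j k * u1x i j k)
        + S3 (cellIdx N) (faceIdx N) (cellIdx N) (fun i j k => u1y i j k * u1y i j k)
        + S3 (cellIdx N) (cellIdx N) (faceIdx N) (fun i j k => u1z i j k * u1z i j k))
        + (S3 (faceIdx N) (cellIdx N) (cellIdx N)
            (fun i j k => (-lapFX N h u1x i j k) * u1x i j k)
          + S3 (cellIdx N) (faceIdx N) (cellIdx N)
            (fun i j k => (-lapFY N h u1y i j k) * u1y i j k)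
          + S3 (cellIdx N) (cellIdx N) (faceIdx N)
            (fun i j k => (-lapFZ N h u1z i j k) * u1z i j k))) := by
      have hsg : 0 ≤ (s/γ) * h^3 := by positivity
      exact mul_nonneg hsg (by linarith)
    linarith [rest]
end
end

section
/- Let s>0, epsilon>0, theta_0>0, gamma>0, let phi^n be a cell-centered grid function on Omega=(0,L)^3 with ||phi^n||_inf < 1, and let (phi^{n+1}, mu^{n+1}, p^{n+1}, u^{n+1}) be a solution of the numerical scheme. Define the discrete energy F_h(phi) = h^3 * sum_{i,j,k=1}^{N} [ (1+phi_{i,j,k})*ln(1+phi_{i,j,k}) + (1-phi_{i,j,k})*ln(1-phi_{i,j,k}) - (theta_0/2)*phi_{i,j,k}^2 ] + (epsilon^2/2)*||grad_h phi||_2^2. Then F_h(phi^{n+1}) - F_h(phi^n) <= -(epsilon^2/2)*||grad_h(phi^{n+1}-phi^n)||_2^2 - s*||grad_h mu^{n+1}||_2^2 - (s/gamma)*( ||u^{n+1}||_2^2 + (-Delta_h u^{n+1}, u^{n+1}) ), where (-Delta_h u^{n+1}, u^{n+1}) is the MAC inner product (and is nonnegative under the stated boundary conditions, equaling the discrete energy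 norm ||grad_h u^{n+1}||_2^2). -/
open Finset

noncomputable section

/-- A solution `(φ^{n+1}, μ^{n+1}, p^{n+1}, u^{n+1})` of the fully discrete,
convex-splitting scheme for the Cahn–Hilliard–Stokes system (data `φⁿ`,
parameters `s, ε, θ₀, γ`); the free-slip and Neumann ghost values are built
into the discrete operators, and `‖φ^{n+1}‖_∞ < 1`. -/
def SchemeSol (N : ℕ) (h s ε θ γ : ℝ)
    (φn φ μ p ux uy uz : ℤ → ℤ → ℤ → ℝ) : Prop :=
  NoPen N ux uy uz ∧ cInf N φ < 1 ∧
  (∀ i ∈ cellIdx N, ∀ j ∈ cellIdx N, ∀ k ∈ cellIdx N,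
    φ i j k - φn i j k =
      s * lapC N h μ i j k -
        s * divH h (fun a b c => AxF N φn a b c * ux a b c)
            (fun a b c => AyF N φn a b c * uy a b c)
            (fun a b c => AzF N φn a b c * uz a b c) i j k) ∧
  (∀ i ∈ cellIdx N, ∀ j ∈ cellIdx N, ∀ k ∈ cellIdx N,
    μ i j k = Real.log (1 + φ i j k) - Real.log (1 - φ i j k) -
      θ * φn i j k - ε ^ 2 * lapC N h φ i j k) ∧
  (∀ i ∈ cellIdx N, ∀ j ∈ cellIdx N, ∀ k ∈ cellIdx N,
    divH h ux uy uz i j k = 0) ∧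
  (∀ i ∈ faceIdx N, ∀ j ∈ cellIdx N, ∀ k ∈ cellIdx N,
    -lapFX N h ux i j k + ux i j k + Dx N h p i j k +
      γ * (AxF N φn i j k * Dx N h μ i j k) = 0) ∧
  (∀ i ∈ cellIdx N, ∀ j ∈ faceIdx N, ∀ k ∈ cellIdx N,
    -lapFY N h uy i j k + uy i j k + Dy N h p i j k +
      γ * (AyF N φn i j k * Dy N h μ i j k) = 0) ∧
  (∀ i ∈ cellIdx N, ∀ j ∈ cellIdx N, ∀ k ∈ faceIdx N,
    -lapFZ N h uz i j k + uz i j k + Dz N h p i j k +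
      γ * (AzF N φn i j k * Dz N h μ i j k) = 0)

/-- Discrete Flory–Huggins free energy. -/
def Fh (N : ℕ) (h ε θ : ℝ) (φ : ℤ → ℤ → ℤ → ℝ) : ℝ :=
  h ^ 3 * ∑ i ∈ cellIdx N, ∑ j ∈ cellIdx N, ∑ k ∈ cellIdx N,
      ((1 + φ i j k) * Real.log (1 + φ i j k) +
        (1 - φ i j k) * Real.log (1 - φ i j k) - θ / 2 * φ i j k ^ 2) +
    ε ^ 2 / 2 * gradSq N h φ

/-!
Test the three equations of the scheme as in the continuous energy estimate. Convex
splitting (implicit logarithm, explicit concave part) and the polarization identity for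
`‖∇_h ·‖²` give `F_h(φ^{n+1}) - F_h(φⁿ) ≤ (μ^{n+1}, φ^{n+1} - φⁿ) - ε²/2 ‖∇_h(φ^{n+1} - φⁿ)‖²`.
By the phase equation and summation by parts, `(μ, φ^{n+1} - φⁿ) = -s‖∇_h μ‖² + s (A_h φⁿ u, ∇_h μ)`;
the Neumann ghost values and the no-penetration condition kill all boundary terms. Testing the
momentum equation with `u` (the pressure does no work because `div_h u = 0`) gives
`γ (A_h φⁿ u, ∇_h μ) = -(‖u‖² + (-Δ_h u, u))`.
-/

section Sums

variable {M : Type*} [AddCommMonoid M] {A A' B B' C C' : Finset ℤ}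

theorem sum3_congr {f g : ℤ → ℤ → ℤ → M}
    (hfg : ∀ i ∈ A, ∀ j ∈ B, ∀ k ∈ C, f i j k = g i j k) :
    ∑ i ∈ A, ∑ j ∈ B, ∑ k ∈ C, f i j k = ∑ i ∈ A, ∑ j ∈ B, ∑ k ∈ C, g i j k :=
  sum_congr rfl fun i hi => sum_congr rfl fun j hj => sum_congr rfl fun k hk => hfg i hi j hj k hk

theorem sum3_congr_x {f g : ℤ → ℤ → ℤ → M}
    (hfg : ∀ j ∈ B, ∀ k ∈ C, ∑ i ∈ A, f i j k = ∑ i ∈ A', g i j k) :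
    ∑ i ∈ A, ∑ j ∈ B, ∑ k ∈ C, f i j k = ∑ i ∈ A', ∑ j ∈ B, ∑ k ∈ C, g i j k := by
  rw [sum_comm, sum_comm (s := A')]
  refine sum_congr rfl fun j hj => ?_
  rw [sum_comm, sum_comm (s := A')]
  exact sum_congr rfl fun k hk => hfg j hj k hk

theorem sum3_congr_y {f g : ℤ → ℤ → ℤ → M}
    (hfg : ∀ i ∈ A, ∀ k ∈ C, ∑ j ∈ B, f i j k = ∑ j ∈ B', g i j k) :
    ∑ i ∈ A, ∑ j ∈ B, ∑ k ∈ C, f i j k = ∑ i ∈ A, ∑ j ∈ B', ∑ k ∈ C, g i j k := by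
  refine sum_congr rfl fun i hi => ?_
  rw [sum_comm, sum_comm (s := B')]
  exact sum_congr rfl fun k hk => hfg i hi k hk

theorem sum3_congr_z {f g : ℤ → ℤ → ℤ → M}
    (hfg : ∀ i ∈ A, ∀ j ∈ B, ∑ k ∈ C, f i j k = ∑ k ∈ C', g i j k) :
    ∑ i ∈ A, ∑ j ∈ B, ∑ k ∈ C, f i j k = ∑ i ∈ A, ∑ j ∈ B, ∑ k ∈ C', g i j k :=
  sum_congr rfl fun i hi => sum_congr rfl fun j hj => hfg i hi j hj

theorem sum_cellIdx_eq_sum_faceIdx {N : ℕ} {F : ℤ → M} (hF : F N = 0) :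
    ∑ i ∈ cellIdx N, F i = ∑ i ∈ faceIdx N, F i := by
  refine (sum_subset (Icc_subset_Icc_right (by omega)) fun i hi hi' => ?_).symm
  rw [mem_Icc] at hi hi'
  rw [show i = N by omega, hF]

theorem sum_cellIdx_sub_one_eq_sum_faceIdx {N : ℕ} {F : ℤ → M} (hF : F 0 = 0) :
    ∑ i ∈ cellIdx N, F (i - 1) = ∑ i ∈ faceIdx N, F i := by
  have hshift : cellIdx N = (Icc 0 ((N : ℤ) - 1)).map (addRightEmbedding 1) := by
    rw [map_add_right_Icc]; simp [cellIdx]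
  rw [hshift, sum_map]
  simp only [addRightEmbedding_apply, add_sub_cancel_right]
  refine (sum_subset (Icc_subset_Icc_left (by omega)) fun i hi hi' => ?_).symm
  rw [mem_Icc] at hi hi'
  rw [show i = 0 by omega, hF]

variable {R : Type*} [CommRing R]

theorem sum_cellIdx_mul_sub {N : ℕ} {g v : ℤ → R} (hv0 : v 0 = 0) (hvN : v N = 0) :
    ∑ i ∈ cellIdx N, g i * (v i - v (i - 1)) = ∑ i ∈ faceIdx N, v i * (g i - g (i + 1)) := by
  have hlast := sum_cellIdx_eq_sum_faceIdx (N := N) (F := fun i => g i * v i) (by simp [hvN])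
  have hfirst := sum_cellIdx_sub_one_eq_sum_faceIdx (N := N) (F := fun i => g (i + 1) * v i)
    (by simp [hv0])
  simp only [sub_add_cancel] at hfirst
  simp only [mul_sub, sum_sub_distrib, hlast, hfirst]
  simp only [mul_comm (v _)]

theorem sum_cellIdx_add_sub_one {N : ℕ} {p : ℤ → R} (hp0 : p 0 = 0) (hpN : p N = 0) :
    ∑ i ∈ cellIdx N, (p i + p (i - 1)) = 2 * ∑ i ∈ faceIdx N, p i := by
  rw [sum_add_distrib, sum_cellIdx_eq_sum_faceIdx hpN,
    sum_cellIdx_sub_one_eq_sum_faceIdx (F := p) hp0, two_mul]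

theorem sum3_mul_self_sub_mul_self (a b : ℤ → ℤ → ℤ → R) :
    ∑ i ∈ A, ∑ j ∈ B, ∑ k ∈ C, a i j k * a i j k - ∑ i ∈ A, ∑ j ∈ B, ∑ k ∈ C, b i j k * b i j k =
      2 * ∑ i ∈ A, ∑ j ∈ B, ∑ k ∈ C, a i j k * (a i j k - b i j k) -
        ∑ i ∈ A, ∑ j ∈ B, ∑ k ∈ C, (a i j k - b i j k) * (a i j k - b i j k) := by
  simp only [mul_sum, ← sum_sub_distrib]
  exact sum3_congr fun _ _ _ _ _ _ => by ring

end Sums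

section Grid

variable {N : ℕ} {h : ℝ}

theorem clampIdx_of_mem {i : ℤ} (hi : i ∈ cellIdx N) : clampIdx N i = i := by
  rw [cellIdx, mem_Icc] at hi
  simp only [clampIdx]
  omega

theorem clampIdx_zero : clampIdx N 0 = clampIdx N 1 := by
  simp only [clampIdx]
  omega

theorem clampIdx_add_one_self : clampIdx N (N + 1) = clampIdx N N := by
  simp only [clampIdx]
  omega

theorem nExt_of_mem (φ : ℤ → ℤ → ℤ → ℝ) {i j k : ℤ}
    (hi : i ∈ cellIdx N) (hj : j ∈ cellIdx N) (hk : k ∈ cellIdx N) : nExt N φ i j k = φ i j k := by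
  rw [nExt, clampIdx_of_mem hi, clampIdx_of_mem hj, clampIdx_of_mem hk]

theorem mem_cellIdx_of_mem_faceIdx {i : ℤ} (hi : i ∈ faceIdx N) : i ∈ cellIdx N := by
  rw [faceIdx, mem_Icc] at hi
  rw [cellIdx, mem_Icc]
  omega

theorem add_one_mem_cellIdx_of_mem_faceIdx {i : ℤ} (hi : i ∈ faceIdx N) : i + 1 ∈ cellIdx N := by
  rw [faceIdx, mem_Icc] at hi
  rw [cellIdx, mem_Icc]
  omega

theorem Dx_of_mem (φ : ℤ → ℤ → ℤ → ℝ) {i j k : ℤ}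
    (hi : i ∈ faceIdx N) (hj : j ∈ cellIdx N) (hk : k ∈ cellIdx N) :
    Dx N h φ i j k = (φ (i + 1) j k - φ i j k) / h := by
  rw [Dx, nExt_of_mem φ (add_one_mem_cellIdx_of_mem_faceIdx hi) hj hk,
    nExt_of_mem φ (mem_cellIdx_of_mem_faceIdx hi) hj hk]

theorem Dy_of_mem (φ : ℤ → ℤ → ℤ → ℝ) {i j k : ℤ}
    (hi : i ∈ cellIdx N) (hj : j ∈ faceIdx N) (hk : k ∈ cellIdx N) :
    Dy N h φ i j k = (φ i (j + 1) k - φ i j k) / h := by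
  rw [Dy, nExt_of_mem φ hi (add_one_mem_cellIdx_of_mem_faceIdx hj) hk,
    nExt_of_mem φ hi (mem_cellIdx_of_mem_faceIdx hj) hk]

theorem Dz_of_mem (φ : ℤ → ℤ → ℤ → ℝ) {i j k : ℤ}
    (hi : i ∈ cellIdx N) (hj : j ∈ cellIdx N) (hk : k ∈ faceIdx N) :
    Dz N h φ i j k = (φ i j (k + 1) - φ i j k) / h := by
  rw [Dz, nExt_of_mem φ hi hj (add_one_mem_cellIdx_of_mem_faceIdx hk),
    nExt_of_mem φ hi hj (mem_cellIdx_of_mem_faceIdx hk)]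

theorem noPen_grad (φ : ℤ → ℤ → ℤ → ℝ) : NoPen N (Dx N h φ) (Dy N h φ) (Dz N h φ) := by
  simp only [NoPen, Dx, Dy, Dz, nExt, zero_add, clampIdx_zero, clampIdx_add_one_self, sub_self,
    zero_div, and_self, implies_true]

theorem NoPen.mul_left {ux uy uz : ℤ → ℤ → ℤ → ℝ} (hu : NoPen N ux uy uz)
    (ax ay az : ℤ → ℤ → ℤ → ℝ) :
    NoPen N (fun a b c => ax a b c * ux a b c) (fun a b c => ay a b c * uy a b c)
      (fun a b c => az a b c * uz a b c) := by
  obtain ⟨hx, hy, hz⟩ := hu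
  refine ⟨fun j hj k hk => ?_, fun i hi k hk => ?_, fun i hi j hj => ?_⟩
  · simp [(hx j hj k hk).1, (hx j hj k hk).2]
  · simp [(hy i hi k hk).1, (hy i hi k hk).2]
  · simp [(hz i hi j hj).1, (hz i hi j hj).2]

theorem lapC_eq_divH_grad (φ : ℤ → ℤ → ℤ → ℝ) :
    lapC N h φ = divH h (Dx N h φ) (Dy N h φ) (Dz N h φ) := by
  funext i j k
  simp only [lapC, divH, Dx, Dy, Dz, sub_add_cancel]
  ring

theorem Dx_sub (φ ψ : ℤ → ℤ → ℤ → ℝ) :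
    Dx N h (fun a b c => φ a b c - ψ a b c) = fun a b c => Dx N h φ a b c - Dx N h ψ a b c := by
  funext i j k
  simp only [Dx, nExt]
  ring

theorem Dy_sub (φ ψ : ℤ → ℤ → ℤ → ℝ) :
    Dy N h (fun a b c => φ a b c - ψ a b c) = fun a b c => Dy N h φ a b c - Dy N h ψ a b c := by
  funext i j k
  simp only [Dy, nExt]
  ring

theorem Dz_sub (φ ψ : ℤ → ℤ → ℤ → ℝ) :
    Dz N h (fun a b c => φ a b c - ψ a b c) = fun a b c => Dz N h φ a b c - Dz N h ψ a b c := by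
  funext i j k
  simp only [Dz, nExt]
  ring

end Grid

def faceIP (N : ℕ) (h : ℝ) (vx vy vz wx wy wz : ℤ → ℤ → ℤ → ℝ) : ℝ :=
  h ^ 3 *
    ((∑ i ∈ faceIdx N, ∑ j ∈ cellIdx N, ∑ k ∈ cellIdx N, vx i j k * wx i j k) +
      (∑ i ∈ cellIdx N, ∑ j ∈ faceIdx N, ∑ k ∈ cellIdx N, vy i j k * wy i j k) +
      (∑ i ∈ cellIdx N, ∑ j ∈ cellIdx N, ∑ k ∈ faceIdx N, vz i j k * wz i j k))

def gradIP (N : ℕ) (h : ℝ) (φ ψ : ℤ → ℤ → ℤ → ℝ) : ℝ :=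
  faceIP N h (Dx N h φ) (Dy N h φ) (Dz N h φ) (Dx N h ψ) (Dy N h ψ) (Dz N h ψ)

section InnerProducts

variable {N : ℕ} {h : ℝ}

theorem gradIP_self (φ : ℤ → ℤ → ℤ → ℝ) : gradIP N h φ φ = gradSq N h φ := by
  simp only [gradIP, faceIP, gradSq, sq]

theorem faceIP_self_sub_faceIP_self (ax ay az bx by' bz : ℤ → ℤ → ℤ → ℝ) :
    faceIP N h ax ay az ax ay az - faceIP N h bx by' bz bx by' bz =
      2 * faceIP N h ax ay az (fun a b c => ax a b c - bx a b c)
          (fun a b c => ay a b c - by' a b c) (fun a b c => az a b c - bz a b c) -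
        faceIP N h (fun a b c => ax a b c - bx a b c) (fun a b c => ay a b c - by' a b c)
          (fun a b c => az a b c - bz a b c) (fun a b c => ax a b c - bx a b c)
          (fun a b c => ay a b c - by' a b c) (fun a b c => az a b c - bz a b c) := by
  simp only [faceIP]
  linear_combination h ^ 3 * (sum3_mul_self_sub_mul_self (A := faceIdx N) ax bx +
    sum3_mul_self_sub_mul_self (B := faceIdx N) ay by' +
    sum3_mul_self_sub_mul_self (C := faceIdx N) az bz)

theorem gradSq_sub_gradSq (φ ψ : ℤ → ℤ → ℤ → ℝ) :
    gradSq N h φ - gradSq N h ψ =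
      2 * gradIP N h φ (fun a b c => φ a b c - ψ a b c) -
        gradSq N h (fun a b c => φ a b c - ψ a b c) := by
  simp only [← gradIP_self, gradIP, Dx_sub, Dy_sub, Dz_sub]
  exact faceIP_self_sub_faceIP_self _ _ _ _ _ _

theorem sum_cellIdx_mul_sub_x {vx : ℤ → ℤ → ℤ → ℝ}
    (hv : ∀ j ∈ cellIdx N, ∀ k ∈ cellIdx N, vx 0 j k = 0 ∧ vx N j k = 0) (g : ℤ → ℤ → ℤ → ℝ) :
    ∑ i ∈ cellIdx N, ∑ j ∈ cellIdx N, ∑ k ∈ cellIdx N, g i j k * (vx i j k - vx (i - 1) j k) =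
      ∑ i ∈ faceIdx N, ∑ j ∈ cellIdx N, ∑ k ∈ cellIdx N, vx i j k * (g i j k - g (i + 1) j k) :=
  sum3_congr_x fun j hj k hk => sum_cellIdx_mul_sub (hv j hj k hk).1 (hv j hj k hk).2

theorem sum_cellIdx_mul_sub_y {vy : ℤ → ℤ → ℤ → ℝ}
    (hv : ∀ i ∈ cellIdx N, ∀ k ∈ cellIdx N, vy i 0 k = 0 ∧ vy i N k = 0) (g : ℤ → ℤ → ℤ → ℝ) :
    ∑ i ∈ cellIdx N, ∑ j ∈ cellIdx N, ∑ k ∈ cellIdx N, g i j k * (vy i j k - vy i (j - 1) k) =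
      ∑ i ∈ cellIdx N, ∑ j ∈ faceIdx N, ∑ k ∈ cellIdx N, vy i j k * (g i j k - g i (j + 1) k) :=
  sum3_congr_y fun i hi k hk => sum_cellIdx_mul_sub (hv i hi k hk).1 (hv i hi k hk).2

theorem sum_cellIdx_mul_sub_z {vz : ℤ → ℤ → ℤ → ℝ}
    (hv : ∀ i ∈ cellIdx N, ∀ j ∈ cellIdx N, vz i j 0 = 0 ∧ vz i j N = 0) (g : ℤ → ℤ → ℤ → ℝ) :
    ∑ i ∈ cellIdx N, ∑ j ∈ cellIdx N, ∑ k ∈ cellIdx N, g i j k * (vz i j k - vz i j (k - 1)) =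
      ∑ i ∈ cellIdx N, ∑ j ∈ cellIdx N, ∑ k ∈ faceIdx N, vz i j k * (g i j k - g i j (k + 1)) :=
  sum3_congr_z fun i hi j hj => sum_cellIdx_mul_sub (hv i hi j hj).1 (hv i hi j hj).2

theorem cip_divH {vx vy vz : ℤ → ℤ → ℤ → ℝ} (hv : NoPen N vx vy vz) (g : ℤ → ℤ → ℤ → ℝ) :
    cip N h g (divH h vx vy vz) = -faceIP N h vx vy vz (Dx N h g) (Dy N h g) (Dz N h g) := by
  obtain ⟨hx, hy, hz⟩ := hv
  have hcell : ∑ i ∈ cellIdx N, ∑ j ∈ cellIdx N, ∑ k ∈ cellIdx N, g i j k * divH h vx vy vz i j k =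
      ∑ i ∈ cellIdx N, ∑ j ∈ cellIdx N, ∑ k ∈ cellIdx N,
        (g i j k * (vx i j k - vx (i - 1) j k) / h + g i j k * (vy i j k - vy i (j - 1) k) / h +
          g i j k * (vz i j k - vz i j (k - 1)) / h) :=
    sum3_congr fun i _ j _ k _ => by rw [divH]; ring
  have hfx : ∑ i ∈ faceIdx N, ∑ j ∈ cellIdx N, ∑ k ∈ cellIdx N, vx i j k * Dx N h g i j k =
      -∑ i ∈ faceIdx N, ∑ j ∈ cellIdx N, ∑ k ∈ cellIdx N, vx i j k * (g i j k - g (i + 1) j k) / h := by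
    simp only [← sum_neg_distrib]
    exact sum3_congr fun i hi j hj k hk => by rw [Dx_of_mem g hi hj hk]; ring
  have hfy : ∑ i ∈ cellIdx N, ∑ j ∈ faceIdx N, ∑ k ∈ cellIdx N, vy i j k * Dy N h g i j k =
      -∑ i ∈ cellIdx N, ∑ j ∈ faceIdx N, ∑ k ∈ cellIdx N, vy i j k * (g i j k - g i (j + 1) k) / h := by
    simp only [← sum_neg_distrib]
    exact sum3_congr fun i hi j hj k hk => by rw [Dy_of_mem g hi hj hk]; ring
  have hfz : ∑ i ∈ cellIdx N, ∑ j ∈ cellIdx N, ∑ k ∈ faceIdx N, vz i j k * Dz N h g i j k =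
      -∑ i ∈ cellIdx N, ∑ j ∈ cellIdx N, ∑ k ∈ faceIdx N, vz i j k * (g i j k - g i j (k + 1)) / h := by
    simp only [← sum_neg_distrib]
    exact sum3_congr fun i hi j hj k hk => by rw [Dz_of_mem g hi hj hk]; ring
  rw [cip, faceIP, hcell, hfx, hfy, hfz]
  simp only [sum_add_distrib, ← sum_div]
  rw [sum_cellIdx_mul_sub_x hx, sum_cellIdx_mul_sub_y hy, sum_cellIdx_mul_sub_z hz]
  ring

theorem cip_lapC (φ ψ : ℤ → ℤ → ℤ → ℝ) : cip N h ψ (lapC N h φ) = -gradIP N h φ ψ := by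
  rw [lapC_eq_divH_grad, cip_divH (noPen_grad φ), gradIP]

theorem ipFX_eq {w : ℤ → ℤ → ℤ → ℝ}
    (hw : ∀ j ∈ cellIdx N, ∀ k ∈ cellIdx N, w 0 j k = 0 ∧ w N j k = 0) (v : ℤ → ℤ → ℤ → ℝ) :
    ipFX N h v w = h ^ 3 * ∑ i ∈ faceIdx N, ∑ j ∈ cellIdx N, ∑ k ∈ cellIdx N, v i j k * w i j k := by
  rw [ipFX, sum3_congr_x (A' := faceIdx N) (g := fun i j k => 2 * (v i j k * w i j k))
    fun j hj k hk => by
      rw [sum_cellIdx_add_sub_one (by simp [(hw j hj k hk).1]) (by simp [(hw j hj k hk).2]),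
        mul_sum]]
  simp only [← mul_sum]
  ring

theorem ipFY_eq {w : ℤ → ℤ → ℤ → ℝ}
    (hw : ∀ i ∈ cellIdx N, ∀ k ∈ cellIdx N, w i 0 k = 0 ∧ w i N k = 0) (v : ℤ → ℤ → ℤ → ℝ) :
    ipFY N h v w = h ^ 3 * ∑ i ∈ cellIdx N, ∑ j ∈ faceIdx N, ∑ k ∈ cellIdx N, v i j k * w i j k := by
  rw [ipFY, sum3_congr_y (B' := faceIdx N) (g := fun i j k => 2 * (v i j k * w i j k))
    fun i hi k hk => by
      rw [sum_cellIdx_add_sub_one (by simp [(hw i hi k hk).1]) (by simp [(hw i hi k hk).2]),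
        mul_sum]]
  simp only [← mul_sum]
  ring

theorem ipFZ_eq {w : ℤ → ℤ → ℤ → ℝ}
    (hw : ∀ i ∈ cellIdx N, ∀ j ∈ cellIdx N, w i j 0 = 0 ∧ w i j N = 0) (v : ℤ → ℤ → ℤ → ℝ) :
    ipFZ N h v w = h ^ 3 * ∑ i ∈ cellIdx N, ∑ j ∈ cellIdx N, ∑ k ∈ faceIdx N, v i j k * w i j k := by
  rw [ipFZ, sum3_congr_z (C' := faceIdx N) (g := fun i j k => 2 * (v i j k * w i j k))
    fun i hi j hj => by
      rw [sum_cellIdx_add_sub_one (by simp [(hw i hi j hj).1]) (by simp [(hw i hi j hj).2]),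
        mul_sum]]
  simp only [← mul_sum]
  ring

theorem macIP_eq_faceIP {wx wy wz : ℤ → ℤ → ℤ → ℝ} (hw : NoPen N wx wy wz)
    (vx vy vz : ℤ → ℤ → ℤ → ℝ) :
    macIP N h vx vy vz wx wy wz = faceIP N h vx vy vz wx wy wz := by
  rw [macIP, ipFX_eq hw.1, ipFY_eq hw.2.1, ipFZ_eq hw.2.2, faceIP]
  ring

end InnerProducts

def floryHuggins (θ x : ℝ) : ℝ :=
  (1 + x) * Real.log (1 + x) + (1 - x) * Real.log (1 - x) - θ / 2 * x ^ 2

theorem mul_log_sub_log_le {a b : ℝ} (ha : 0 < a) (hb : 0 < b) :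
    b * (Real.log a - Real.log b) ≤ a - b := by
  rw [← Real.log_div ha.ne' hb.ne']
  calc b * Real.log (a / b) ≤ b * (a / b - 1) :=
        mul_le_mul_of_nonneg_left (Real.log_le_sub_one_of_pos (div_pos ha hb)) hb.le
    _ = a - b := by field_simp

/-- Convex splitting: the logarithmic part is treated implicitly, the concave
part `-θ x² / 2` explicitly. -/
theorem floryHuggins_sub_le {θ x y : ℝ} (hθ : 0 ≤ θ) (hx : |x| < 1) (hy : |y| < 1) :
    floryHuggins θ x - floryHuggins θ y ≤
      (Real.log (1 + x) - Real.log (1 - x) - θ * y) * (x - y) := by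
  rw [abs_lt] at hx hy
  have hplus := mul_log_sub_log_le (a := 1 + x) (b := 1 + y) (by linarith) (by linarith)
  have hminus := mul_log_sub_log_le (a := 1 - x) (b := 1 - y) (by linarith) (by linarith)
  rw [floryHuggins, floryHuggins]
  nlinarith [mul_nonneg hθ (sq_nonneg (x - y))]

theorem abs_le_cInf (N : ℕ) (φ : ℤ → ℤ → ℤ → ℝ) {i j k : ℤ}
    (hi : i ∈ cellIdx N) (hj : j ∈ cellIdx N) (hk : k ∈ cellIdx N) : |φ i j k| ≤ cInf N φ := by
  refine le_csSup (Set.Finite.bddAbove ?_) ⟨i, hi, j, hj, k, hk, rfl⟩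
  refine (((cellIdx N ×ˢ cellIdx N ×ˢ cellIdx N).image
    fun t => |φ t.1 t.2.1 t.2.2|).finite_toSet).subset ?_
  rintro r ⟨a, ha, b, hb, c, hc, rfl⟩
  exact mem_image.mpr ⟨(a, b, c), by simp [ha, hb, hc], rfl⟩

section Scheme

variable {N : ℕ} {h s ε θ γ : ℝ} {φn φ μ p ux uy uz : ℤ → ℤ → ℤ → ℝ}

theorem Fh_sub_le (hh : 0 ≤ h) (hθ : 0 ≤ θ) (hφn : cInf N φn < 1) (hφ : cInf N φ < 1)
    (hμ : ∀ i ∈ cellIdx N, ∀ j ∈ cellIdx N, ∀ k ∈ cellIdx N,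
      μ i j k = Real.log (1 + φ i j k) - Real.log (1 - φ i j k) -
        θ * φn i j k - ε ^ 2 * lapC N h φ i j k) :
    Fh N h ε θ φ - Fh N h ε θ φn ≤
      cip N h μ (fun a b c => φ a b c - φn a b c) -
        ε ^ 2 / 2 * gradSq N h (fun a b c => φ a b c - φn a b c) := by
  have hconv : ∑ i ∈ cellIdx N, ∑ j ∈ cellIdx N, ∑ k ∈ cellIdx N,
        (floryHuggins θ (φ i j k) - floryHuggins θ (φn i j k)) ≤
      ∑ i ∈ cellIdx N, ∑ j ∈ cellIdx N, ∑ k ∈ cellIdx N,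
        (Real.log (1 + φ i j k) - Real.log (1 - φ i j k) - θ * φn i j k) *
          (φ i j k - φn i j k) :=
    sum_le_sum fun i hi => sum_le_sum fun j hj => sum_le_sum fun k hk =>
      floryHuggins_sub_le hθ ((abs_le_cInf N φ hi hj hk).trans_lt hφ)
        ((abs_le_cInf N φn hi hj hk).trans_lt hφn)
  simp only [sum_sub_distrib] at hconv
  have hcip : cip N h μ (fun a b c => φ a b c - φn a b c) =
      h ^ 3 * ∑ i ∈ cellIdx N, ∑ j ∈ cellIdx N, ∑ k ∈ cellIdx N,
        (Real.log (1 + φ i j k) - Real.log (1 - φ i j k) - θ * φn i j k) *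
          (φ i j k - φn i j k) +
      ε ^ 2 * gradIP N h φ (fun a b c => φ a b c - φn a b c) := by
    have hlap := cip_lapC (N := N) (h := h) φ (fun a b c => φ a b c - φn a b c)
    rw [cip] at hlap ⊢
    rw [sum3_congr (g := fun i j k =>
      (Real.log (1 + φ i j k) - Real.log (1 - φ i j k) - θ * φn i j k) * (φ i j k - φn i j k) -
        ε ^ 2 * ((φ i j k - φn i j k) * lapC N h φ i j k))
      fun i hi j hj k hk => by rw [hμ i hi j hj k hk]; ring]
    simp only [sum_sub_distrib, ← mul_sum]
    linear_combination -ε ^ 2 * hlap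
  have hFh : ∀ ψ, Fh N h ε θ ψ = h ^ 3 * ∑ i ∈ cellIdx N, ∑ j ∈ cellIdx N, ∑ k ∈ cellIdx N,
      floryHuggins θ (ψ i j k) + ε ^ 2 / 2 * gradSq N h ψ := fun _ => rfl
  rw [hFh, hFh, hcip]
  linear_combination mul_le_mul_of_nonneg_left hconv (pow_nonneg hh 3) +
    ε ^ 2 / 2 * gradSq_sub_gradSq (N := N) (h := h) φ φn

theorem cip_sub_eq_of_phase (hu : NoPen N ux uy uz)
    (hphase : ∀ i ∈ cellIdx N, ∀ j ∈ cellIdx N, ∀ k ∈ cellIdx N,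
      φ i j k - φn i j k =
        s * lapC N h μ i j k -
          s * divH h (fun a b c => AxF N φn a b c * ux a b c)
              (fun a b c => AyF N φn a b c * uy a b c)
              (fun a b c => AzF N φn a b c * uz a b c) i j k) :
    cip N h μ (fun a b c => φ a b c - φn a b c) =
      -s * gradSq N h μ +
        s * faceIP N h (fun a b c => AxF N φn a b c * ux a b c)
          (fun a b c => AyF N φn a b c * uy a b c) (fun a b c => AzF N φn a b c * uz a b c)
          (Dx N h μ) (Dy N h μ) (Dz N h μ) := by
  have hsplit : cip N h μ (fun a b c => φ a b c - φn a b c) =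
      s * cip N h μ (lapC N h μ) -
        s * cip N h μ (divH h (fun a b c => AxF N φn a b c * ux a b c)
          (fun a b c => AyF N φn a b c * uy a b c) (fun a b c => AzF N φn a b c * uz a b c)) := by
    simp only [cip]
    rw [sum3_congr fun i hi j hj k hk => by rw [hphase i hi j hj k hk, mul_sub, mul_left_comm,
      mul_left_comm (μ i j k)]]
    simp only [sum_sub_distrib, ← mul_sum]
    ring
  rw [hsplit, cip_lapC, gradIP_self, cip_divH (hu.mul_left _ _ _)]
  ring

theorem faceIP_flux_eq_of_momentum (hu : NoPen N ux uy uz)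
    (hdiv : ∀ i ∈ cellIdx N, ∀ j ∈ cellIdx N, ∀ k ∈ cellIdx N, divH h ux uy uz i j k = 0)
    (hmx : ∀ i ∈ faceIdx N, ∀ j ∈ cellIdx N, ∀ k ∈ cellIdx N,
      -lapFX N h ux i j k + ux i j k + Dx N h p i j k +
        γ * (AxF N φn i j k * Dx N h μ i j k) = 0)
    (hmy : ∀ i ∈ cellIdx N, ∀ j ∈ faceIdx N, ∀ k ∈ cellIdx N,
      -lapFY N h uy i j k + uy i j k + Dy N h p i j k +
        γ * (AyF N φn i j k * Dy N h μ i j k) = 0)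
    (hmz : ∀ i ∈ cellIdx N, ∀ j ∈ cellIdx N, ∀ k ∈ faceIdx N,
      -lapFZ N h uz i j k + uz i j k + Dz N h p i j k +
        γ * (AzF N φn i j k * Dz N h μ i j k) = 0) :
    γ * faceIP N h (fun a b c => AxF N φn a b c * ux a b c)
        (fun a b c => AyF N φn a b c * uy a b c) (fun a b c => AzF N φn a b c * uz a b c)
        (Dx N h μ) (Dy N h μ) (Dz N h μ) =
      -(macIP N h ux uy uz ux uy uz +
        macIP N h (fun a b c => -lapFX N h ux a b c) (fun a b c => -lapFY N h uy a b c)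
          (fun a b c => -lapFZ N h uz a b c) ux uy uz) := by
  have hpressure : faceIP N h ux uy uz (Dx N h p) (Dy N h p) (Dz N h p) = 0 := by
    rw [← neg_eq_zero, ← cip_divH hu, cip]
    simp (disch := assumption) only [hdiv, mul_zero, sum_const_zero]
  have hx : ∑ i ∈ faceIdx N, ∑ j ∈ cellIdx N, ∑ k ∈ cellIdx N,
      (-lapFX N h ux i j k * ux i j k + ux i j k * ux i j k + ux i j k * Dx N h p i j k +
        γ * (AxF N φn i j k * ux i j k * Dx N h μ i j k)) = 0 :=
    sum_eq_zero fun i hi => sum_eq_zero fun j hj => sum_eq_zero fun k hk => by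
      linear_combination ux i j k * hmx i hi j hj k hk
  have hy : ∑ i ∈ cellIdx N, ∑ j ∈ faceIdx N, ∑ k ∈ cellIdx N,
      (-lapFY N h uy i j k * uy i j k + uy i j k * uy i j k + uy i j k * Dy N h p i j k +
        γ * (AyF N φn i j k * uy i j k * Dy N h μ i j k)) = 0 :=
    sum_eq_zero fun i hi => sum_eq_zero fun j hj => sum_eq_zero fun k hk => by
      linear_combination uy i j k * hmy i hi j hj k hk
  have hz : ∑ i ∈ cellIdx N, ∑ j ∈ cellIdx N, ∑ k ∈ faceIdx N,
      (-lapFZ N h uz i j k * uz i j k + uz i j k * uz i j k + uz i j k * Dz N h p i j k +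
        γ * (AzF N φn i j k * uz i j k * Dz N h μ i j k)) = 0 :=
    sum_eq_zero fun i hi => sum_eq_zero fun j hj => sum_eq_zero fun k hk => by
      linear_combination uz i j k * hmz i hi j hj k hk
  simp only [sum_add_distrib, ← mul_sum] at hx hy hz
  rw [macIP_eq_faceIP hu, macIP_eq_faceIP hu]
  simp only [faceIP] at hpressure ⊢
  linear_combination h ^ 3 * (hx + hy + hz) - hpressure

end Scheme

theorem scheme_energy_stable_general (L : ℝ) (hL : 0 < L) (N : ℕ)
    (s ε θ γ : ℝ) (hθ : 0 < θ) (hγ : 0 < γ)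
    (φn φ μ p ux uy uz : ℤ → ℤ → ℤ → ℝ) (hφn : cInf N φn < 1)
    (hsol : SchemeSol N (L / N) s ε θ γ φn φ μ p ux uy uz) :
    Fh N (L / N) ε θ φ - Fh N (L / N) ε θ φn ≤
      -(ε ^ 2 / 2) * gradSq N (L / N) (fun a b c => φ a b c - φn a b c) -
        s * gradSq N (L / N) μ -
        s / γ * (macIP N (L / N) ux uy uz ux uy uz +
          macIP N (L / N) (fun a b c => -lapFX N (L / N) ux a b c)
            (fun a b c => -lapFY N (L / N) uy a b c)
            (fun a b c => -lapFZ N (L / N) uz a b c) ux uy uz) := by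
  obtain ⟨hu, hφ, hphase, hμ, hdiv, hmx, hmy, hmz⟩ := hsol
  have henergy := Fh_sub_le (div_nonneg hL.le N.cast_nonneg) hθ.le hφn hφ hμ
  have hconvection := faceIP_flux_eq_of_momentum hu hdiv hmx hmy hmz
  rw [mul_comm, ← eq_div_iff hγ.ne'] at hconvection
  rw [cip_sub_eq_of_phase hu hphase, hconvection] at henergy
  linear_combination henergy

/-- unconditional energy stability: for any solution of the
scheme with `‖φⁿ‖_∞ < 1`,
`F_h(φ^{n+1}) - F_h(φⁿ) ≤ -(ε²/2)‖∇_h(φ^{n+1}-φⁿ)‖₂² - s‖∇_h μ^{n+1}‖₂²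
 - (s/γ)(‖u^{n+1}‖₂² + (-Δ_h u^{n+1}, u^{n+1}))`. -/
theorem scheme_energy_stable (L : ℝ) (hL : 0 < L) (N : ℕ) (hN : 0 < N)
    (s ε θ γ : ℝ) (hs : 0 < s) (hε : 0 < ε) (hθ : 0 < θ) (hγ : 0 < γ)
    (φn φ μ p ux uy uz : ℤ → ℤ → ℤ → ℝ) (hφn : cInf N φn < 1)
    (hsol : SchemeSol N (L / N) s ε θ γ φn φ μ p ux uy uz) :
    Fh N (L / N) ε θ φ - Fh N (L / N) ε θ φn ≤
      -(ε ^ 2 / 2) * gradSq N (L / N) (fun a b c => φ a b c - φn a b c) -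
        s * gradSq N (L / N) μ -
        s / γ * (macIP N (L / N) ux uy uz ux uy uz +
          macIP N (L / N) (fun a b c => -lapFX N (L / N) ux a b c)
            (fun a b c => -lapFY N (L / N) uy a b c)
            (fun a b c => -lapFZ N (L / N) uz a b c) ux uy uz) :=
  scheme_energy_stable_general L hL N s ε θ γ hθ hγ φn φ μ p ux uy uz hφn hsol
end
end
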